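/- arXiv:2108.12351 — 8 statements merged into one kernel-verified Lean document; each statement's English description precedes it below -/
import Mathlib

section
/- For any additive function g: ℕ → ℂ and any Y ≥ 3, the average (1/Y)∑_{n ≤ Y} g(n) equals A_g(Y) + O(B_g(Y)/√(log Y)), where the implied constant is absolute. -/
/-!
Grouping each `n ≤ N = ⌊Y⌋` by its exact prime-power divisors `q = p^k ∥ n`, additivity gives
`∑_{n ≤ N} g(n) = ∑_q g(q) (⌊N/q⌋ - ⌊N/(qp)⌋)`. Replacing the floors by `Y/q` and `Y/(qp)`
produces `Y · A_g(Y)` with an error of at most `2 ∑_q |g(q)|`. By Cauchy–Schwarz,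
`∑_q |g(q)| ≤ B_g(Y) (∑_q q)^{1/2}`, and `∑_q q ≤ Y · #{q ≤ Y} ≪ Y² / log Y`: the primes are
counted with Chebyshev's bound `θ(Y) ≤ Y log 4`, the higher prime powers with
`ψ(Y) - θ(Y) ≪ √Y log Y`.
-/

open Finset

/-- The set of prime powers `p^k ≤ Y` (as natural numbers `≥ 2`). -/
noncomputable def ppows (Y : ℝ) : Finset ℕ :=
  (Finset.Icc 2 ⌊Y⌋₊).filter IsPrimePow

/-- `A_g(Y) = ∑_{p^k ≤ Y} g(p^k) p^{-k} (1 - 1/p)`. -/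
noncomputable def Ag (g : ℕ → ℂ) (Y : ℝ) : ℂ :=
  ∑ q ∈ ppows Y, g q * (1 / (q : ℂ)) * (1 - 1 / ((q.minFac : ℂ)))

/-- `B_g(Y) = (∑_{p^k ≤ Y} |g(p^k)|² p^{-k})^{1/2}`. -/
noncomputable def Bg (g : ℕ → ℂ) (Y : ℝ) : ℝ :=
  Real.sqrt (∑ q ∈ ppows Y, ‖g q‖ ^ 2 / (q : ℝ))

/-- `g` is additive: `g(mn) = g(m) + g(n)` whenever `gcd(m,n) = 1`. -/
def IsAdditive (g : ℕ → ℂ) : Prop :=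
  ∀ m n : ℕ, Nat.Coprime m n → g (m * n) = g m + g n

open Real Chebyshev

namespace IsAdditive

variable {g : ℕ → ℂ}

theorem map_one (hg : IsAdditive g) : g 1 = 0 := by
  simpa using hg 1 1 (Nat.coprime_one_left 1)

theorem eq_sum_factorization (hg : IsAdditive g) :
    ∀ {n : ℕ}, n ≠ 0 → g n = n.factorization.sum fun p k ↦ g (p ^ k) := by
  apply Nat.recOnPosPrimePosCoprime
  · rintro p k hp - -
    rw [hp.factorization_pow, Finsupp.sum_single_index (by rw [pow_zero, hg.map_one])]
  · simp
  · simp [hg.map_one]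
  · intro a b _ _ hab iha ihb hab0
    rw [hg a b hab, iha (left_ne_zero_of_mul hab0), ihb (right_ne_zero_of_mul hab0),
      Nat.factorization_mul_of_coprime hab,
      Finsupp.sum_add_index_of_disjoint hab.disjoint_primeFactors]

end IsAdditive

theorem Nat.Prime.pow_dvd_and_not_pow_mul_dvd_iff {p k n : ℕ} (hp : p.Prime) (hn : n ≠ 0) :
    p ^ k ∣ n ∧ ¬ p ^ k * p ∣ n ↔ n.factorization p = k := by
  rw [← pow_succ, hp.pow_dvd_iff_le_factorization hn, hp.pow_dvd_iff_le_factorization hn]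
  omega

theorem IsPrimePow.dvd_and_not_mul_minFac_dvd_iff {q n : ℕ} (hq : IsPrimePow q) (hn : n ≠ 0) :
    q ∣ n ∧ ¬ q * q.minFac ∣ n ↔ q.minFac ^ n.factorization q.minFac = q := by
  obtain ⟨p, k, hp, hk, rfl⟩ := isPrimePow_nat_iff _ |>.mp hq
  rw [hp.pow_minFac hk.ne', hp.pow_dvd_and_not_pow_mul_dvd_iff hn]
  exact ⟨by rintro rfl; rfl, fun h ↦ Nat.pow_right_injective hp.two_le h⟩

theorem IsAdditive.eq_sum_ppows {g : ℕ → ℂ} (hg : IsAdditive g) {Y : ℝ} {n : ℕ} (hn : n ≠ 0)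
    (hnY : n ≤ ⌊Y⌋₊) : g n = ∑ q ∈ ppows Y with q ∣ n ∧ ¬ q * q.minFac ∣ n, g q := by
  rw [hg.eq_sum_factorization hn, Finsupp.sum]
  refine sum_nbij' (fun p ↦ p ^ n.factorization p) Nat.minFac ?_ ?_ ?_ ?_ fun _ _ ↦ rfl
  · intro p hp
    have hp' : p.Prime := Nat.prime_of_mem_primeFactors hp
    have hpow : IsPrimePow (p ^ n.factorization p) :=
      hp'.isPrimePow.pow (Finsupp.mem_support_iff.mp hp)
    simp only [ppows, mem_filter, mem_Icc]
    refine ⟨⟨⟨hpow.two_le, (Nat.le_of_dvd (by omega) (Nat.ordProj_dvd n p)).trans hnY⟩, hpow⟩, ?_⟩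
    rw [hpow.dvd_and_not_mul_minFac_dvd_iff hn, hp'.pow_minFac (Finsupp.mem_support_iff.mp hp)]
  · intro q hq
    simp only [ppows, mem_filter, mem_Icc] at hq
    exact Nat.mem_primeFactors.mpr
      ⟨Nat.minFac_prime (by omega), (Nat.minFac_dvd q).trans hq.2.1, hn⟩
  · intro p hp
    exact (Nat.prime_of_mem_primeFactors hp).pow_minFac (Finsupp.mem_support_iff.mp hp)
  · intro q hq
    simp only [ppows, mem_filter] at hq
    exact (hq.1.2.dvd_and_not_mul_minFac_dvd_iff hn).mp hq.2

theorem Nat.card_filter_dvd_and_not_dvd_add_div {d e : ℕ} (hde : d ∣ e) (N : ℕ) :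
    #{n ∈ Ioc 0 N | d ∣ n ∧ ¬ e ∣ n} + N / e = N / d := by
  rw [filter_and_not, ← Nat.Ioc_filter_dvd_card_eq_div N e, ← Nat.Ioc_filter_dvd_card_eq_div N d]
  exact card_sdiff_add_card_eq_card fun n hn ↦ by
    simp only [mem_filter] at hn ⊢
    exact ⟨hn.1, hde.trans hn.2⟩

theorem IsAdditive.sum_Icc_eq {g : ℕ → ℂ} (hg : IsAdditive g) (Y : ℝ) :
    ∑ n ∈ Icc 1 ⌊Y⌋₊, g n
      = ∑ q ∈ ppows Y, g q * (((⌊Y⌋₊ / q : ℕ) : ℂ) - ((⌊Y⌋₊ / (q * q.minFac) : ℕ) : ℂ)) := by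
  rw [show Icc 1 ⌊Y⌋₊ = Ioc 0 ⌊Y⌋₊ from Icc_add_one_left_eq_Ioc 0 _]
  calc ∑ n ∈ Ioc 0 ⌊Y⌋₊, g n
      = ∑ n ∈ Ioc 0 ⌊Y⌋₊, ∑ q ∈ ppows Y, if q ∣ n ∧ ¬ q * q.minFac ∣ n then g q else 0 :=
        sum_congr rfl fun n hn ↦ by
          rw [← sum_filter]
          exact hg.eq_sum_ppows (mem_Ioc.mp hn).1.ne' (mem_Ioc.mp hn).2
    _ = _ := by
        rw [sum_comm]
        refine sum_congr rfl fun q _ ↦ ?_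
        rw [sum_ite, sum_const_zero, add_zero, sum_const, nsmul_eq_mul, mul_comm]
        congr 1
        refine eq_sub_of_add_eq ?_
        exact_mod_cast Nat.card_filter_dvd_and_not_dvd_add_div (dvd_mul_right q q.minFac) ⌊Y⌋₊

theorem abs_natFloor_div_div_sub_inv_le {Y : ℝ} (hY : 0 < Y) (d : ℕ) :
    |((⌊Y⌋₊ / d : ℕ) : ℝ) / Y - 1 / d| ≤ 1 / Y := by
  have hfloor : ((⌊Y⌋₊ / d : ℕ) : ℝ) = ⌊Y / d⌋₊ := by rw [Nat.floor_div_natCast]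
  have hle : (⌊Y / d⌋₊ : ℝ) ≤ Y / d := Nat.floor_le (by positivity)
  have hlt : Y / d < ⌊Y / d⌋₊ + 1 := Nat.lt_floor_add_one _
  rw [hfloor, show (⌊Y / d⌋₊ : ℝ) / Y - 1 / d = (⌊Y / d⌋₊ - Y / d) / Y by field_simp, abs_div,
    abs_of_pos hY]
  gcongr
  rw [abs_le]
  constructor <;> linarith

theorem IsAdditive.norm_average_sub_Ag_le {g : ℕ → ℂ} (hg : IsAdditive g) {Y : ℝ} (hY : 0 < Y) :
    ‖(1 / (Y : ℂ)) * ∑ n ∈ Icc 1 ⌊Y⌋₊, g n - Ag g Y‖ ≤ 2 / Y * ∑ q ∈ ppows Y, ‖g q‖ := by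
  rw [hg.sum_Icc_eq, Ag, mul_sum, ← sum_sub_distrib, mul_sum]
  refine (norm_sum_le _ _).trans (sum_le_sum fun q hq ↦ ?_)
  have hq : q ≠ 0 := by simp only [ppows, mem_filter, mem_Icc] at hq; omega
  set r : ℕ → ℝ := fun d ↦ ((⌊Y⌋₊ / d : ℕ) : ℝ) / Y - 1 / d
  have key : 1 / (Y : ℂ) * (g q * (((⌊Y⌋₊ / q : ℕ) : ℂ) - ((⌊Y⌋₊ / (q * q.minFac) : ℕ) : ℂ)))
      - g q * (1 / (q : ℂ)) * (1 - 1 / (q.minFac : ℂ))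
        = g q * ((r q - r (q * q.minFac) : ℝ) : ℂ) := by
    have : (q.minFac : ℂ) ≠ 0 := by exact_mod_cast (Nat.minFac_pos q).ne'
    simp only [r]
    push_cast
    field_simp
    ring
  rw [key, norm_mul, Complex.norm_real, Real.norm_eq_abs, mul_comm]
  gcongr
  calc |r q - r (q * q.minFac)| ≤ |r q| + |r (q * q.minFac)| := abs_sub _ _
    _ ≤ 1 / Y + 1 / Y := add_le_add (abs_natFloor_div_div_sub_inv_le hY _)
        (abs_natFloor_div_div_sub_inv_le hY _)
    _ = 2 / Y := by ring

theorem sum_norm_le_Bg_mul_sqrt (g : ℕ → ℂ) (Y : ℝ) :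
    ∑ q ∈ ppows Y, ‖g q‖ ≤ Bg g Y * √(∑ q ∈ ppows Y, (q : ℝ)) := by
  have hfactor : ∀ q ∈ ppows Y, ‖g q‖ = ‖g q‖ / √q * √q := fun q hq ↦ by
    simp only [ppows, mem_filter, mem_Icc] at hq
    rw [div_mul_cancel₀ _ (Real.sqrt_pos.mpr (by exact_mod_cast (by omega : 0 < q))).ne']
  rw [sum_congr rfl hfactor, Bg]
  convert Real.sum_mul_le_sqrt_mul_sqrt (ppows Y) (fun q ↦ ‖g q‖ / √q) (fun q ↦ √q) using 3 <;>
    refine sum_congr rfl fun q _ ↦ ?_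
  · rw [div_pow, Real.sq_sqrt q.cast_nonneg]
  · rw [Real.sq_sqrt q.cast_nonneg]

theorem Real.log_le_two_mul_sqrt {x : ℝ} (hx : 0 ≤ x) : log x ≤ 2 * √x := by
  linarith [log_sqrt hx, log_le_self (sqrt_nonneg x)]

theorem Real.sqrt_mul_log_le {x : ℝ} (hx : 0 ≤ x) : √x * log x ≤ 2 * x := by
  have := mul_le_mul_of_nonneg_left (log_le_two_mul_sqrt hx) (sqrt_nonneg x)
  linarith [mul_self_sqrt hx]

theorem Real.sqrt_mul_log_sq_le {x : ℝ} (hx : 1 ≤ x) : √x * log x ^ 2 ≤ 16 * x := by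
  have hx0 : 0 ≤ x := by linarith
  have hlog : log x ≤ 4 * √(√x) := by
    linarith [log_sqrt hx0, log_le_two_mul_sqrt (sqrt_nonneg x)]
  have hsq : log x ^ 2 ≤ 16 * √x := by
    nlinarith [log_nonneg hx, sq_sqrt (sqrt_nonneg x)]
  nlinarith [sqrt_nonneg x, mul_self_sqrt hx0]

theorem card_filter_prime_ppows (Y : ℝ) : #{q ∈ ppows Y | q.Prime} = Nat.primeCounting ⌊Y⌋₊ := by
  rw [← Nat.primesLE_card_eq_primeCounting, Nat.primesLE_eq_filter_Icc_two, ppows, filter_filter]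
  congr 1
  ext q
  simp only [mem_filter, and_congr_right_iff]
  exact fun _ ↦ ⟨And.right, fun hq ↦ ⟨hq.isPrimePow, hq⟩⟩

theorem primeCounting_mul_log_le {Y : ℝ} (hY : 1 ≤ Y) :
    (Nat.primeCounting ⌊Y⌋₊ : ℝ) * log Y ≤ √Y * log Y + 2 * θ Y := by
  rw [theta_eq_sum_primesLE, ← Nat.primesLE_card_eq_primeCounting]
  set m := ⌊√Y⌋₊
  have hsmall : (#{p ∈ Nat.primesLE ⌊Y⌋₊ | p ≤ m} : ℝ) ≤ √Y := by
    have hsub : {p ∈ Nat.primesLE ⌊Y⌋₊ | p ≤ m} ⊆ Ioc 0 m := fun p hp ↦ by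
      simp only [mem_filter, Nat.mem_primesLE] at hp
      exact mem_Ioc.mpr ⟨hp.1.2.pos, hp.2⟩
    calc (#{p ∈ Nat.primesLE ⌊Y⌋₊ | p ≤ m} : ℝ) ≤ #(Ioc 0 m) := by
          exact_mod_cast card_le_card hsub
      _ = m := by simp
      _ ≤ √Y := Nat.floor_le (sqrt_nonneg Y)
  have hterm : ∀ p ∈ Nat.primesLE ⌊Y⌋₊, log Y ≤ 2 * log p + if p ≤ m then log Y else 0 := by
    intro p hp
    have hp1 : (1 : ℝ) ≤ p := by exact_mod_cast (Nat.prime_of_mem_primesLE hp).one_le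
    split_ifs with hpm
    · linarith [log_nonneg hp1]
    · have hsqrt : √Y ≤ p := (Nat.lt_of_floor_lt (not_le.mp hpm)).le
      have := log_le_log (sqrt_pos.mpr (by linarith)) hsqrt
      rw [log_sqrt (by linarith)] at this
      linarith
  calc (#(Nat.primesLE ⌊Y⌋₊) : ℝ) * log Y = ∑ p ∈ Nat.primesLE ⌊Y⌋₊, log Y := by
        rw [sum_const, nsmul_eq_mul]
    _ ≤ ∑ p ∈ Nat.primesLE ⌊Y⌋₊, (2 * log p + if p ≤ m then log Y else 0) := sum_le_sum hterm
    _ = #{p ∈ Nat.primesLE ⌊Y⌋₊ | p ≤ m} * log Y + 2 * ∑ p ∈ Nat.primesLE ⌊Y⌋₊, log p := by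
        rw [sum_add_distrib, ← mul_sum, ← sum_filter, sum_const, nsmul_eq_mul, add_comm]
    _ ≤ √Y * log Y + 2 * ∑ p ∈ Nat.primesLE ⌊Y⌋₊, log p := by
        gcongr
        exact log_nonneg hY

theorem card_filter_not_prime_ppows_mul_log_two_le (Y : ℝ) :
    #{q ∈ ppows Y | ¬ q.Prime} * log 2 ≤ ψ Y - θ Y := by
  rw [psi_sub_theta_eq_sum_not_prime, ← nsmul_eq_mul, ← sum_const]
  calc ∑ _ ∈ {q ∈ ppows Y | ¬ q.Prime}, log 2
      ≤ ∑ q ∈ {q ∈ ppows Y | ¬ q.Prime}, ArithmeticFunction.vonMangoldt q := by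
        refine sum_le_sum fun q hq ↦ ?_
        simp only [ppows, mem_filter, mem_Icc] at hq
        rw [ArithmeticFunction.vonMangoldt_apply, if_pos hq.1.2]
        exact log_le_log two_pos (by exact_mod_cast (Nat.minFac_prime (by omega)).two_le)
    _ ≤ ∑ n ∈ Ioc 0 ⌊Y⌋₊ with ¬ n.Prime, ArithmeticFunction.vonMangoldt n := by
        refine sum_le_sum_of_subset_of_nonneg (fun q hq ↦ ?_)
          fun n _ _ ↦ ArithmeticFunction.vonMangoldt_nonneg
        simp only [ppows, mem_filter, mem_Icc, mem_Ioc] at hq ⊢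
        exact ⟨⟨by omega, hq.1.1.2⟩, hq.2⟩

theorem card_ppows_mul_log_le {Y : ℝ} (hY : 1 ≤ Y) : #(ppows Y) * log Y ≤ 64 * Y := by
  have hprime : #{q ∈ ppows Y | q.Prime} * log Y ≤ 2 * Y + 2 * log 4 * Y := by
    rw [card_filter_prime_ppows]
    linarith [primeCounting_mul_log_le hY, sqrt_mul_log_le (x := Y) (by linarith),
      theta_le_log4_mul_x (x := Y) (by linarith)]
  have hnotPrime : #{q ∈ ppows Y | ¬ q.Prime} * log Y * log 2 ≤ 32 * Y := by
    calc #{q ∈ ppows Y | ¬ q.Prime} * log Y * log 2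
        = #{q ∈ ppows Y | ¬ q.Prime} * log 2 * log Y := by ring
      _ ≤ 2 * √Y * log Y * log Y := by
        refine mul_le_mul_of_nonneg_right ?_ (log_nonneg hY)
        exact (card_filter_not_prime_ppows_mul_log_two_le Y).trans
            ((le_abs_self _).trans (abs_psi_sub_theta_le_sqrt_mul_log hY))
      _ = 2 * (√Y * log Y ^ 2) := by ring
      _ ≤ 32 * Y := by linarith [sqrt_mul_log_sq_le hY]
  have hlog4 : log 4 = 2 * log 2 := by
    rw [show (4 : ℝ) = 2 ^ 2 by norm_num, log_pow, Nat.cast_ofNat]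
  have hnotPrime_nonneg : 0 ≤ (#{q ∈ ppows Y | ¬ q.Prime} : ℝ) * log Y :=
    mul_nonneg (Nat.cast_nonneg _) (log_nonneg hY)
  rw [← card_filter_add_card_filter_not (p := Nat.Prime), Nat.cast_add, add_mul]
  nlinarith [log_two_gt_d9, log_two_lt_d9,
    mul_le_mul_of_nonneg_left log_two_gt_d9.le hnotPrime_nonneg]

theorem sum_ppows_le {Y : ℝ} (hY : 1 < Y) : ∑ q ∈ ppows Y, (q : ℝ) ≤ 64 * Y ^ 2 / log Y := by
  have hq : ∀ q ∈ ppows Y, (q : ℝ) ≤ Y := fun q hq ↦ by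
    simp only [ppows, mem_filter, mem_Icc] at hq
    exact (Nat.cast_le.mpr hq.1.2).trans (Nat.floor_le (by linarith))
  have hcard : (#(ppows Y) : ℝ) ≤ 64 * Y / log Y :=
    (le_div_iff₀ (log_pos hY)).mpr (card_ppows_mul_log_le hY.le)
  calc ∑ q ∈ ppows Y, (q : ℝ) ≤ #(ppows Y) * Y := by
        simpa using sum_le_card_nsmul _ _ _ hq
    _ ≤ 64 * Y / log Y * Y := by gcongr
    _ = 64 * Y ^ 2 / log Y := by ring

/-- For any additive `g : ℕ → ℂ` and `Y ≥ 3`,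
`(1/Y) ∑_{n ≤ Y} g(n) = A_g(Y) + O(B_g(Y)/√(log Y))` with an absolute constant. -/
theorem stmt0 :
    ∃ C : ℝ, 0 < C ∧ ∀ (g : ℕ → ℂ), IsAdditive g → ∀ Y : ℝ, 3 ≤ Y →
      ‖(1 / (Y : ℂ)) * ∑ n ∈ Finset.Icc 1 ⌊Y⌋₊, g n - Ag g Y‖
        ≤ C * Bg g Y / Real.sqrt (Real.log Y) := by
  refine ⟨16, by norm_num, fun g hg Y hY ↦ ?_⟩
  have hlog : 0 < log Y := log_pos (by linarith)
  have hsqrt_sum : √(∑ q ∈ ppows Y, (q : ℝ)) ≤ 8 * Y / √(log Y) := by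
    rw [sqrt_le_iff, div_pow, mul_pow, sq_sqrt hlog.le]
    exact ⟨by positivity, by linarith [sum_ppows_le (Y := Y) (by linarith)]⟩
  calc ‖(1 / (Y : ℂ)) * ∑ n ∈ Icc 1 ⌊Y⌋₊, g n - Ag g Y‖
      ≤ 2 / Y * ∑ q ∈ ppows Y, ‖g q‖ := hg.norm_average_sub_Ag_le (by linarith)
    _ ≤ 2 / Y * (Bg g Y * (8 * Y / √(log Y))) := by
        gcongr
        exact (sum_norm_le_Bg_mul_sqrt g Y).trans
          (mul_le_mul_of_nonneg_left hsqrt_sum (sqrt_nonneg _))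
    _ = 16 * Bg g Y / √(log Y) := by
        field_simp
        ring
end

section
/- For any additive function g: ℕ → ℂ and any real numbers 1 ≤ y/2 ≤ z ≤ y, one has |A_g(y) − A_g(z)| ≪ B_g(y)/√(log y) with an absolute implied constant. -/
open Finset

private lemma ppows_subset {z y : ℝ} (h : z ≤ y) : ppows z ⊆ ppows y :=
  Finset.filter_subset_filter _ (Finset.Icc_subset_Icc le_rfl (Nat.floor_mono h))

private lemma mem_D {y z : ℝ} (hy0 : 0 ≤ y) (hz0 : 0 ≤ z) {q : ℕ}
    (hq : q ∈ ppows y \ ppows z) :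
    IsPrimePow q ∧ z < (q : ℝ) ∧ (q : ℝ) ≤ y ∧ q ≤ ⌊y⌋₊ := by
  rw [Finset.mem_sdiff] at hq
  obtain ⟨h1, h2⟩ := hq
  rw [ppows, Finset.mem_filter, Finset.mem_Icc] at h1 h2
  refine ⟨h1.2, ?_, ?_, h1.1.2⟩
  · by_contra h
    push_neg at h
    exact h2 ⟨⟨h1.1.1, Nat.le_floor h⟩, h1.2⟩
  · exact le_trans (Nat.cast_le.mpr h1.1.2) (Nat.floor_le hy0)

private lemma minFac_injOn {y z : ℝ} (hy0 : 0 ≤ y) (hz0 : 0 ≤ z) (hz1 : y / 2 ≤ z) :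
    Set.InjOn Nat.minFac (ppows y \ ppows z : Finset ℕ) := by
  have key : ∀ a ∈ ppows y \ ppows z, ∀ b ∈ ppows y \ ppows z,
      a.minFac = b.minFac → a < b → False := by
    intro a ha b hb hab hlt
    obtain ⟨hpa, hza, hya, -⟩ := mem_D hy0 hz0 ha
    obtain ⟨hpb, hzb, hyb, -⟩ := mem_D hy0 hz0 hb
    have hp2 : 2 ≤ a.minFac := (Nat.minFac_prime hpa.ne_one).two_le
    have ea : a.minFac ^ (a.factorization a.minFac) = a := hpa.minFac_pow_factorization_eq
    have eb : a.minFac ^ (b.factorization b.minFac) = b := by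
      rw [hab]; exact hpb.minFac_pow_factorization_eq
    have hk : a.factorization a.minFac < b.factorization b.minFac := by
      rw [← Nat.pow_lt_pow_iff_right (by omega : 1 < a.minFac), ea, eb]; exact hlt
    have h2a : 2 * a ≤ b := by
      have h1 : a.minFac ^ (a.factorization a.minFac + 1) ≤ b := by
        rw [← eb]; exact Nat.pow_le_pow_right (by omega) (by omega)
      rw [pow_succ, ea] at h1
      calc 2 * a = a * 2 := by ring
        _ ≤ a * a.minFac := Nat.mul_le_mul_left a hp2
        _ ≤ b := h1
    have h2a' : (2 : ℝ) * a ≤ b := by exact_mod_cast h2a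
    have : y / 2 < (a : ℝ) := lt_of_le_of_lt hz1 hza
    linarith
  intro a ha b hb hab
  by_contra hne
  rcases lt_or_gt_of_ne hne with h | h
  · exact key a (Finset.mem_coe.mp ha) b (Finset.mem_coe.mp hb) hab h
  · exact key b (Finset.mem_coe.mp hb) a (Finset.mem_coe.mp ha) hab.symm h

private lemma card_nonprime {y z : ℝ} (hy0 : 0 ≤ y) (hz0 : 0 ≤ z) (hz1 : y / 2 ≤ z) :
    ((ppows y \ ppows z).filter (fun q => ¬ q.Prime)).card ≤ Nat.sqrt ⌊y⌋₊ := by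
  set Dh := (ppows y \ ppows z).filter (fun q => ¬ q.Prime) with hDh
  have hinj : Set.InjOn Nat.minFac (Dh : Finset ℕ) := by
    apply (minFac_injOn hy0 hz0 hz1).mono
    intro x hx
    exact Finset.mem_coe.mpr (Finset.filter_subset _ _ (Finset.mem_coe.mp hx))
  have himg : Dh.image Nat.minFac ⊆ Finset.Icc 2 (Nat.sqrt ⌊y⌋₊) := by
    intro p hp
    simp only [Finset.mem_image] at hp
    obtain ⟨q, hq, rfl⟩ := hp
    obtain ⟨hq1, hq2⟩ := Finset.mem_filter.mp hq
    obtain ⟨hpp, -, -, hqfloor⟩ := mem_D hy0 hz0 hq1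
    have hpf := Nat.minFac_prime hpp.ne_one
    rw [Finset.mem_Icc]
    refine ⟨hpf.two_le, ?_⟩
    rw [Nat.le_sqrt]
    have ea : q.minFac ^ (q.factorization q.minFac) = q := hpp.minFac_pow_factorization_eq
    have hk0 : q.factorization q.minFac ≠ 0 := by
      intro h; rw [h, pow_zero] at ea; exact hpp.ne_one ea.symm
    have hk1 : q.factorization q.minFac ≠ 1 := by
      intro h; rw [h, pow_one] at ea; rw [← ea] at hq2; exact hq2 hpf
    have h2 : q.minFac * q.minFac ≤ q := by
      calc q.minFac * q.minFac = q.minFac ^ 2 := (sq _).symm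
        _ ≤ q.minFac ^ (q.factorization q.minFac) :=
            Nat.pow_le_pow_right hpf.pos (by omega)
        _ = q := ea
    omega
  calc Dh.card = (Dh.image Nat.minFac).card := (Finset.card_image_of_injOn hinj).symm
    _ ≤ (Finset.Icc 2 (Nat.sqrt ⌊y⌋₊)).card := Finset.card_le_card himg
    _ ≤ Nat.sqrt ⌊y⌋₊ := by rw [Nat.card_Icc]; omega

private lemma card_prime {y z : ℝ} (hy0 : 0 ≤ y) (hz0 : 0 ≤ z) (hy2 : 2 ≤ y)
    (hz1 : y / 2 ≤ z) :
    (((ppows y \ ppows z).filter Nat.Prime).card : ℝ) * Real.log (y / 2) ≤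
      y * Real.log 4 := by
  set Dp := (ppows y \ ppows z).filter Nat.Prime with hDp
  have h1 : ∏ q ∈ Dp, q ≤ primorial ⌊y⌋₊ := by
    apply Finset.prod_le_prod_of_subset_of_one_le'
    · intro q hq
      obtain ⟨hq1, hq2⟩ := Finset.mem_filter.mp hq
      obtain ⟨-, -, -, hqfloor⟩ := mem_D hy0 hz0 hq1
      rw [Finset.mem_filter, Finset.mem_range]
      exact ⟨by omega, hq2⟩
    · intro i hi _
      exact (Finset.mem_filter.mp hi).2.pos
  have hhalf : (1 : ℝ) ≤ y / 2 := by linarith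
  have h2 : ((y / 2 : ℝ)) ^ Dp.card ≤ (4 : ℝ) ^ y := by
    calc ((y / 2 : ℝ)) ^ Dp.card = ∏ _q ∈ Dp, (y / 2 : ℝ) := (Finset.prod_const _).symm
      _ ≤ ∏ q ∈ Dp, (q : ℝ) := by
          refine Finset.prod_le_prod (fun _ _ => by linarith) (fun q hq => ?_)
          obtain ⟨-, hzq, -, -⟩ := mem_D hy0 hz0 (Finset.mem_filter.mp hq).1
          linarith
      _ = ((∏ q ∈ Dp, q : ℕ) : ℝ) := by rw [Nat.cast_prod]
      _ ≤ ((primorial ⌊y⌋₊ : ℕ) : ℝ) := Nat.cast_le.mpr h1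
      _ ≤ (((4 : ℕ) ^ ⌊y⌋₊ : ℕ) : ℝ) := Nat.cast_le.mpr (primorial_le_4_pow _)
      _ = (4 : ℝ) ^ (⌊y⌋₊ : ℕ) := by push_cast; ring
      _ ≤ (4 : ℝ) ^ y := by
          rw [← Real.rpow_natCast 4 ⌊y⌋₊]
          exact Real.rpow_le_rpow_of_exponent_le (by norm_num) (Nat.floor_le hy0)
  have h3 := Real.log_le_log (by positivity) h2
  rw [Real.log_pow, Real.log_rpow (by norm_num : (0:ℝ) < 4)] at h3
  exact h3

private lemma T_bound {y z : ℝ} (hy : 2 ≤ y) (hz1 : y / 2 ≤ z) (hzy : z ≤ y) :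
    (∑ q ∈ ppows y \ ppows z, ((q : ℝ))⁻¹) * Real.log y ≤ 10 := by
  have hy0 : (0 : ℝ) ≤ y := by linarith
  have hz0 : (0 : ℝ) ≤ z := by linarith
  set D := ppows y \ ppows z with hD
  set T := ∑ q ∈ D, ((q : ℝ))⁻¹ with hT
  have hT0 : 0 ≤ T := Finset.sum_nonneg fun q _ => by positivity
  have hlog0 : 0 ≤ Real.log y := Real.log_nonneg (by linarith)
  have hq2 : ∀ q ∈ D, 2 ≤ q := fun q hq => (mem_D hy0 hz0 hq).1.two_le
  rcases le_or_gt y 4 with h4 | h4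
  · -- small case
    have hcard : D.card ≤ 3 := by
      have hsub : D ⊆ Finset.Icc 2 ⌊y⌋₊ := by
        intro q hq
        rw [hD, Finset.mem_sdiff, ppows, Finset.mem_filter] at hq
        exact hq.1.1
      have hfl : ⌊y⌋₊ ≤ 4 := by
        calc ⌊y⌋₊ ≤ ⌊(4:ℝ)⌋₊ := Nat.floor_mono h4
          _ = 4 := by norm_num
      calc D.card ≤ (Finset.Icc 2 ⌊y⌋₊).card := Finset.card_le_card hsub
        _ = ⌊y⌋₊ + 1 - 2 := by rw [Nat.card_Icc]
        _ ≤ 3 := by omega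
    have hTle : T ≤ 3 / 2 := by
      calc T ≤ ∑ q ∈ D, (1 / 2 : ℝ) := by
            refine Finset.sum_le_sum fun q hq => ?_
            have h2q : (2 : ℝ) ≤ (q : ℝ) := by exact_mod_cast hq2 q hq
            rw [inv_eq_one_div, div_le_div_iff₀ (by linarith) (by norm_num)]
            linarith
        _ = D.card * (1 / 2 : ℝ) := by rw [Finset.sum_const, nsmul_eq_mul]
        _ ≤ 3 * (1 / 2 : ℝ) := by
            have : (D.card : ℝ) ≤ 3 := by exact_mod_cast hcard
            linarith
        _ = 3 / 2 := by norm_num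
    have hlogle : Real.log y ≤ 3 := by
      have := Real.log_le_sub_one_of_pos (by linarith : (0:ℝ) < y)
      linarith
    nlinarith
  · -- main case, y > 4
    have hyow : (0:ℝ) < y := by linarith
    set n := ((ppows y \ ppows z).filter Nat.Prime).card with hn
    set m := ((ppows y \ ppows z).filter (fun q => ¬ q.Prime)).card with hm
    have hcard : D.card = n + m := by
      rw [hD, hn, hm, Finset.card_filter_add_card_filter_not]
    have hTle : T ≤ (D.card : ℝ) * (2 / y) := by
      calc T ≤ ∑ q ∈ D, (2 / y : ℝ) := by
            refine Finset.sum_le_sum fun q hq => ?_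
            obtain ⟨-, hzq, -, -⟩ := mem_D hy0 hz0 hq
            have hq0 : (0 : ℝ) < q := by
              have := hq2 q hq; positivity
            rw [inv_eq_one_div, div_le_div_iff₀ hq0 hyow]
            linarith
        _ = (D.card : ℝ) * (2 / y) := by rw [Finset.sum_const, nsmul_eq_mul]
    have hlhalf : Real.log y ≤ 2 * Real.log (y / 2) := by
      have e1 : Real.log (y / 2) = Real.log y - Real.log 2 :=
        Real.log_div (by linarith) (by norm_num)
      have e2 : Real.log 2 ≤ Real.log (y / 2) :=
        Real.log_le_log (by norm_num) (by linarith)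
      linarith
    have hnb : (n : ℝ) * Real.log y ≤ 2 * (y * Real.log 4) := by
      have h1 := card_prime hy0 hz0 hy hz1
      rw [← hn] at h1
      have h2 : (n : ℝ) * Real.log y ≤ (n : ℝ) * (2 * Real.log (y / 2)) :=
        mul_le_mul_of_nonneg_left hlhalf (Nat.cast_nonneg n)
      nlinarith
    have hmb : (m : ℝ) * Real.log y ≤ 2 * y := by
      have hms : (m : ℝ) ≤ Real.sqrt y := by
        have h1 : (m : ℝ) ≤ ((Nat.sqrt ⌊y⌋₊ : ℕ) : ℝ) :=
          Nat.cast_le.mpr (card_nonprime hy0 hz0 hz1)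
        have h2 : ((Nat.sqrt ⌊y⌋₊ : ℕ) : ℝ) ≤ Real.sqrt (⌊y⌋₊ : ℝ) :=
          Real.nat_sqrt_le_real_sqrt
        have h3 : Real.sqrt (⌊y⌋₊ : ℝ) ≤ Real.sqrt y :=
          Real.sqrt_le_sqrt (Nat.floor_le hy0)
        linarith
      have hlsq : Real.log y ≤ 2 * Real.sqrt y := by
        have h := Real.log_le_rpow_div hy0 (by norm_num : (0:ℝ) < 1/2)
        rw [Real.sqrt_eq_rpow]
        linarith
      have hmul : (m : ℝ) * Real.log y ≤ Real.sqrt y * (2 * Real.sqrt y) :=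
        mul_le_mul hms hlsq hlog0 (Real.sqrt_nonneg y)
      nlinarith [Real.mul_self_sqrt hy0]
    have step1 : T * Real.log y ≤ ((n + m : ℕ) : ℝ) * (2 / y) * Real.log y := by
      rw [← hcard]
      exact mul_le_mul_of_nonneg_right hTle hlog0
    have step2 : ((n + m : ℕ) : ℝ) * (2 / y) * Real.log y
        = (2 * ((n : ℝ) * Real.log y) + 2 * ((m : ℝ) * Real.log y)) / y := by
      push_cast; ring
    have hlog4 : Real.log 4 ≤ 3 / 2 := by
      have h2 : Real.log 2 < 0.6931471808 := Real.log_two_lt_d9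
      have e4 : Real.log 4 = 2 * Real.log 2 := by
        rw [show (4:ℝ) = 2 ^ 2 by norm_num, Real.log_pow]; push_cast; ring
      nlinarith
    have step3 : (2 * ((n : ℝ) * Real.log y) + 2 * ((m : ℝ) * Real.log y)) / y ≤ 10 := by
      rw [div_le_iff₀ hyow]
      nlinarith
    linarith [step1, step2 ▸ step1]

/-- For additive `g` and `1 ≤ y/2 ≤ z ≤ y`, `|A_g(y) - A_g(z)| ≪ B_g(y)/√(log y)`
with an absolute implied constant. -/
theorem stmt1 :
    ∃ C : ℝ, 0 < C ∧ ∀ (g : ℕ → ℂ), IsAdditive g → ∀ y z : ℝ,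
      1 ≤ y / 2 → y / 2 ≤ z → z ≤ y →
      ‖Ag g y - Ag g z‖ ≤ C * Bg g y / Real.sqrt (Real.log y) := by
  refine ⟨4, by norm_num, ?_⟩
  intro g _ y z hy2 hz1 hzy
  have hy : (2:ℝ) ≤ y := by linarith
  have hy0 : (0:ℝ) ≤ y := by linarith
  have hz0 : (0:ℝ) ≤ z := by linarith
  have hlogpos : 0 < Real.log y := Real.log_pos (by linarith)
  have hsub : ppows z ⊆ ppows y := ppows_subset hzy
  set D := ppows y \ ppows z with hD
  have hq0 : ∀ q ∈ D, (0:ℝ) < (q:ℝ) := by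
    intro q hq
    have h2 : 2 ≤ q := (mem_D hy0 hz0 hq).1.two_le
    have : (2:ℝ) ≤ (q:ℝ) := by exact_mod_cast h2
    linarith
  have hdiff : Ag g y - Ag g z
      = ∑ q ∈ D, (g q * (1 / (q : ℂ)) * (1 - 1 / ((q.minFac : ℂ)))) := by
    rw [Ag, Ag, ← Finset.sum_sdiff_eq_sub hsub]
  have hnorm : ‖Ag g y - Ag g z‖ ≤ ∑ q ∈ D, ‖g q‖ * ((q:ℝ))⁻¹ := by
    rw [hdiff]
    refine (norm_sum_le _ _).trans (Finset.sum_le_sum fun q hq => ?_)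
    obtain ⟨hpp, -, -, -⟩ := mem_D hy0 hz0 hq
    have hp1 : (1:ℝ) ≤ (q.minFac : ℝ) := by exact_mod_cast Nat.minFac_pos q
    rw [norm_mul, norm_mul]
    have h1 : ‖(1:ℂ) / (q:ℂ)‖ = ((q:ℝ))⁻¹ := by
      rw [norm_div, norm_one, Complex.norm_natCast, one_div]
    have h2 : ‖1 - 1 / ((q.minFac : ℂ))‖ ≤ 1 := by
      have he : (1 : ℂ) - 1 / ((q.minFac : ℂ)) = (((1 - 1 / ((q.minFac : ℝ))) : ℝ) : ℂ) := by
        push_cast; ring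
      rw [he, Complex.norm_real, Real.norm_eq_abs]
      have hp0 : (0:ℝ) < (q.minFac : ℝ) := by linarith
      have hle : 1 / ((q.minFac : ℝ)) ≤ 1 := by
        rw [div_le_one hp0]; exact hp1
      have hge : 0 ≤ 1 / ((q.minFac : ℝ)) := by positivity
      rw [abs_of_nonneg (by linarith)]
      linarith
    rw [h1]
    exact mul_le_of_le_one_right (by positivity) h2
  have hCS : ∑ q ∈ D, ‖g q‖ * ((q:ℝ))⁻¹ ≤
      Real.sqrt (∑ q ∈ D, ‖g q‖ ^ 2 / (q:ℝ)) * Real.sqrt (∑ q ∈ D, ((q:ℝ))⁻¹) := by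
    have h := Real.sum_mul_le_sqrt_mul_sqrt D (fun q => ‖g q‖ / Real.sqrt q)
      (fun q => (Real.sqrt q)⁻¹)
    have e1 : ∑ q ∈ D, (‖g q‖ / Real.sqrt q) * (Real.sqrt q)⁻¹
        = ∑ q ∈ D, ‖g q‖ * ((q:ℝ))⁻¹ := by
      refine Finset.sum_congr rfl fun q hq => ?_
      have hs : Real.sqrt q * Real.sqrt q = (q:ℝ) := Real.mul_self_sqrt (hq0 q hq).le
      rw [div_eq_mul_inv, mul_assoc, ← mul_inv, hs]
    have e2 : ∑ q ∈ D, (‖g q‖ / Real.sqrt q) ^ 2 = ∑ q ∈ D, ‖g q‖ ^ 2 / (q:ℝ) := by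
      refine Finset.sum_congr rfl fun q hq => ?_
      rw [div_pow, Real.sq_sqrt (hq0 q hq).le]
    have e3 : ∑ q ∈ D, ((Real.sqrt q)⁻¹) ^ 2 = ∑ q ∈ D, ((q:ℝ))⁻¹ := by
      refine Finset.sum_congr rfl fun q hq => ?_
      rw [inv_pow, Real.sq_sqrt (hq0 q hq).le]
    rw [e1, e2, e3] at h
    exact h
  have hB : Real.sqrt (∑ q ∈ D, ‖g q‖ ^ 2 / (q:ℝ)) ≤ Bg g y := by
    apply Real.sqrt_le_sqrt
    refine Finset.sum_le_sum_of_subset_of_nonneg Finset.sdiff_subset fun q hq _ => ?_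
    positivity
  have hTb : Real.sqrt (∑ q ∈ D, ((q:ℝ))⁻¹) ≤ Real.sqrt 10 / Real.sqrt (Real.log y) := by
    rw [← Real.sqrt_div (by norm_num : (0:ℝ) ≤ 10) (Real.log y)]
    apply Real.sqrt_le_sqrt
    rw [le_div_iff₀ hlogpos]
    exact T_bound hy hz1 hzy
  have hBg0 : 0 ≤ Bg g y := Real.sqrt_nonneg _
  have hfin : Real.sqrt 10 ≤ 4 := by
    nlinarith [Real.sq_sqrt (by norm_num : (0:ℝ) ≤ 10), Real.sqrt_nonneg 10]
  have hsl : 0 ≤ Real.sqrt (Real.log y) := Real.sqrt_nonneg _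
  calc ‖Ag g y - Ag g z‖ ≤ ∑ q ∈ D, ‖g q‖ * ((q:ℝ))⁻¹ := hnorm
    _ ≤ Real.sqrt (∑ q ∈ D, ‖g q‖ ^ 2 / (q:ℝ)) * Real.sqrt (∑ q ∈ D, ((q:ℝ))⁻¹) := hCS
    _ ≤ Bg g y * (Real.sqrt 10 / Real.sqrt (Real.log y)) := by
        apply mul_le_mul hB hTb (Real.sqrt_nonneg _) hBg0
    _ = (Bg g y * Real.sqrt 10) / Real.sqrt (Real.log y) := by ring
    _ ≤ 4 * Bg g y / Real.sqrt (Real.log y) := by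
        have hslpos : 0 < Real.sqrt (Real.log y) := Real.sqrt_pos.mpr hlogpos
        rw [div_le_div_iff₀ hslpos hslpos]
        have hnum : Bg g y * Real.sqrt 10 ≤ 4 * Bg g y := by
          nlinarith [mul_le_mul_of_nonneg_left hfin hBg0]
        nlinarith [mul_le_mul_of_nonneg_right hnum hsl]
end

section
/- Let g: ℕ → ℂ be an additive function that is either completely additive or strongly additive, and suppose B_g(X) → ∞ as X → ∞. Then the contribution of higher prime powers is negligible: ∑_{p^k ≤ X, k ≥ 2} |g(p^k)|² p^{-k} = o(B_g(X)²) as X → ∞. -/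
open Finset

/-- `g` is completely additive: `g(mn) = g(m) + g(n)` for all positive `m, n`. -/
def IsCompletelyAdditive (g : ℕ → ℂ) : Prop :=
  ∀ m n : ℕ, 0 < m → 0 < n → g (m * n) = g m + g n

/-- `g` is strongly additive: additive with `g(p^k) = g(p)` for all primes `p`, `k ≥ 1`. -/
def IsStronglyAdditive (g : ℕ → ℂ) : Prop :=
  IsAdditive g ∧ ∀ p k : ℕ, p.Prime → 1 ≤ k → g (p ^ k) = g p

/-!
For `k ≥ 2` both kinds of additivity give `|g(p^k)| ≤ k |g(p)|`, and `p^k ≥ p² 2^(k-2)`, so the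
prime powers `p^k` with `k ≥ 2` contribute at most a constant times `∑_{p ≤ X} |g(p)|²/p²`.
Cutting this sum at a fixed `P`, the primes `p ≤ P` give a constant and the primes `p > P` give at
most `B_g(X)²/P`; as `B_g(X) → ∞`, the constant is eventually negligible too.
-/

open Filter

namespace IsCompletelyAdditive

variable {g : ℕ → ℂ}

theorem map_one (h : IsCompletelyAdditive g) : g 1 = 0 := by
  simpa using h 1 1 one_pos one_pos

theorem map_pow (h : IsCompletelyAdditive g) {n : ℕ} (hn : 0 < n) (k : ℕ) :
    g (n ^ k) = k * g n := by
  induction k with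
  | zero => simpa using h.map_one
  | succ k ih =>
    rw [pow_succ, h _ _ (pow_pos hn k) hn, ih]
    push_cast
    ring

end IsCompletelyAdditive

theorem norm_map_prime_pow_le {g : ℕ → ℂ}
    (hcs : IsCompletelyAdditive g ∨ IsStronglyAdditive g) {p k : ℕ} (hp : p.Prime)
    (hk : 1 ≤ k) : ‖g (p ^ k)‖ ≤ k * ‖g p‖ := by
  rcases hcs with h | h
  · rw [h.map_pow hp.pos, norm_mul, Complex.norm_natCast]
  · rw [h.2 p k hp hk]
    exact le_mul_of_one_le_left (norm_nonneg _) (mod_cast hk)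

theorem sq_mul_two_pow_le_four_mul_pow {p : ℝ} (hp : 2 ≤ p) {k : ℕ} (hk : 2 ≤ k) :
    p ^ 2 * 2 ^ k ≤ 4 * p ^ k := by
  obtain ⟨j, rfl⟩ := Nat.exists_eq_add_of_le hk
  have : (2 : ℝ) ^ j ≤ p ^ j := pow_le_pow_left₀ zero_le_two hp j
  rw [pow_add, pow_add]
  nlinarith [pow_nonneg (zero_le_two.trans hp) 2]

theorem norm_sq_div_prime_pow_le {g : ℕ → ℂ}
    (hcs : IsCompletelyAdditive g ∨ IsStronglyAdditive g) {p k : ℕ} (hp : p.Prime)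
    (hk : 2 ≤ k) :
    ‖g (p ^ k)‖ ^ 2 / ((p ^ k : ℕ) : ℝ) ≤
      4 * ((k : ℝ) ^ 2 * (1 / 2) ^ k) * (‖g p‖ ^ 2 / p / p) := by
  have hp0 : (0 : ℝ) < p := mod_cast hp.pos
  have hnorm : ‖g (p ^ k)‖ ^ 2 ≤ (k : ℝ) ^ 2 * ‖g p‖ ^ 2 := by
    rw [← mul_pow]
    exact pow_le_pow_left₀ (norm_nonneg _) (norm_map_prime_pow_le hcs hp (by omega)) 2
  have hpow := sq_mul_two_pow_le_four_mul_pow (p := p) (mod_cast hp.two_le) hk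
  rw [Nat.cast_pow, div_le_iff₀ (by positivity)]
  calc ‖g (p ^ k)‖ ^ 2 ≤ (k : ℝ) ^ 2 * ‖g p‖ ^ 2 := hnorm
    _ = (k : ℝ) ^ 2 * ‖g p‖ ^ 2 / (p ^ 2 * 2 ^ k) * (p ^ 2 * 2 ^ k) := by field_simp
    _ ≤ (k : ℝ) ^ 2 * ‖g p‖ ^ 2 / (p ^ 2 * 2 ^ k) * (4 * p ^ k) := by gcongr
    _ = 4 * ((k : ℝ) ^ 2 * (1 / 2) ^ k) * (‖g p‖ ^ 2 / p / p) * p ^ k := by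
      rw [one_div, inv_pow]
      field_simp

theorem IsPrimePow.two_le_factorization_minFac {q : ℕ} (hq : IsPrimePow q) (hnp : ¬ q.Prime) :
    2 ≤ q.factorization q.minFac := by
  have hpow := hq.minFac_pow_factorization_eq
  by_contra! hlt
  interval_cases h : q.factorization q.minFac
  · rw [pow_zero] at hpow
    exact hq.ne_one hpow.symm
  · rw [pow_one] at hpow
    exact hnp (hpow ▸ Nat.minFac_prime hq.ne_one)

theorem Bg_sq (g : ℕ → ℂ) (X : ℝ) : Bg g X ^ 2 = ∑ q ∈ ppows X, ‖g q‖ ^ 2 / (q : ℝ) :=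
  Real.sq_sqrt (sum_nonneg fun _ _ => by positivity)

theorem sum_prime_le_Bg_sq (g : ℕ → ℂ) (X : ℝ) :
    ∑ p ∈ (ppows X).filter Nat.Prime, ‖g p‖ ^ 2 / (p : ℝ) ≤ Bg g X ^ 2 := by
  rw [Bg_sq]
  exact sum_le_sum_of_subset_of_nonneg (filter_subset _ _) fun _ _ _ => by positivity

theorem minFac_mem_ppows {X : ℝ} {q : ℕ} (hq : q ∈ ppows X) :
    q.minFac ∈ (ppows X).filter Nat.Prime := by
  simp only [ppows, mem_filter, mem_Icc] at hq ⊢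
  obtain ⟨⟨h2q, hqX⟩, hpow⟩ := hq
  have hp := Nat.minFac_prime hpow.ne_one
  exact ⟨⟨⟨hp.two_le, (Nat.minFac_le (by omega)).trans hqX⟩, hp.isPrimePow⟩, hp⟩

theorem sum_nonprime_ppows_le {g : ℕ → ℂ}
    (hcs : IsCompletelyAdditive g ∨ IsStronglyAdditive g) (X : ℝ) :
    ∑ q ∈ (ppows X).filter (fun q => ¬ q.Prime), ‖g q‖ ^ 2 / (q : ℝ) ≤
      4 * (∑' k : ℕ, (k : ℝ) ^ 2 * (1 / 2) ^ k) *
        ∑ p ∈ (ppows X).filter Nat.Prime, ‖g p‖ ^ 2 / p / p := by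
  set T := (ppows X).filter (fun q => ¬ q.Prime)
  set w : ℕ → ℝ := fun k => (k : ℝ) ^ 2 * (1 / 2) ^ k
  set e : ℕ → ℕ × ℕ := fun q => (q.minFac, q.factorization q.minFac)
  set F : ℕ × ℕ → ℝ := fun x => 4 * w x.2 * (‖g x.1‖ ^ 2 / x.1 / x.1)
  have hw : Summable w := summable_pow_mul_geometric_of_norm_lt_one 2 (by norm_num)
  have hT : ∀ q ∈ T, IsPrimePow q ∧ ¬ q.Prime ∧ q ∈ ppows X := fun q hq => by
    simp only [T, ppows, mem_filter] at hq ⊢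
    exact ⟨hq.1.2, hq.2, hq.1⟩
  have he : ∀ q ∈ T, q.minFac ^ (e q).2 = q := fun q hq =>
    (hT q hq).1.minFac_pow_factorization_eq
  calc ∑ q ∈ T, ‖g q‖ ^ 2 / (q : ℝ)
      ≤ ∑ q ∈ T, F (e q) := sum_le_sum fun q hq => by
        obtain ⟨hpow, hnp, -⟩ := hT q hq
        have := norm_sq_div_prime_pow_le hcs (Nat.minFac_prime hpow.ne_one)
          (hpow.two_le_factorization_minFac hnp)
        rwa [he q hq] at this
    _ = ∑ x ∈ T.image e, F x := by
      refine (sum_image fun a ha b hb hab => ?_).symm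
      rw [← he a ha, ← he b hb, hab]
      simp only [e, Prod.mk.injEq] at hab
      rw [hab.1]
    _ ≤ ∑ x ∈ (ppows X).filter Nat.Prime ×ˢ T.image (fun q => (e q).2), F x := by
      refine sum_le_sum_of_subset_of_nonneg (fun x hx => ?_) fun _ _ _ => by positivity
      obtain ⟨q, hq, rfl⟩ := mem_image.mp hx
      exact mem_product.mpr ⟨minFac_mem_ppows (hT q hq).2.2, mem_image_of_mem _ hq⟩
    _ ≤ ∑ p ∈ (ppows X).filter Nat.Prime, 4 * (∑' k, w k) * (‖g p‖ ^ 2 / p / p) := by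
      rw [sum_product]
      refine sum_le_sum fun p _ => ?_
      simp only [F, ← sum_mul, ← mul_sum]
      gcongr
      exact hw.sum_le_tsum _ fun _ _ => by positivity
    _ = _ := (mul_sum _ _ _).symm

theorem sum_div_le_sum_range_add_div (a : ℕ → ℝ) (ha : ∀ n, 0 ≤ a n) (s : Finset ℕ) {P : ℕ}
    (hP : 0 < P) :
    ∑ n ∈ s, a n / n ≤ ∑ n ∈ range (P + 1), a n / n + (∑ n ∈ s, a n) / P := by
  rw [← sum_filter_add_sum_filter_not s (· ≤ P)]
  gcongr ?_ + ?_
  · refine sum_le_sum_of_subset_of_nonneg (fun n hn => ?_)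
      fun n _ _ => div_nonneg (ha n) n.cast_nonneg
    exact mem_range.mpr (Nat.lt_succ_of_le (mem_filter.mp hn).2)
  · calc ∑ n ∈ s.filter (¬ · ≤ P), a n / n
        ≤ ∑ n ∈ s.filter (¬ · ≤ P), a n / P := sum_le_sum fun n hn => by
          have hPn : (P : ℝ) ≤ n := mod_cast (not_le.mp (mem_filter.mp hn).2).le
          exact div_le_div_of_nonneg_left (ha n) (by positivity) hPn
      _ ≤ (∑ n ∈ s, a n) / P := by
          rw [← sum_div]
          exact div_le_div_of_nonneg_right
            (sum_le_sum_of_subset_of_nonneg (filter_subset _ _) fun n _ _ => ha n) P.cast_nonneg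

theorem eventually_le_mul_of_forall_le_add_div {f B : ℝ → ℝ} {c : ℝ}
    (hB : Tendsto B atTop atTop) (hf : ∀ P : ℕ, 0 < P → ∃ K, ∀ X, f X ≤ K + c / P * B X)
    {ε : ℝ} (hε : 0 < ε) : ∀ᶠ X in atTop, f X ≤ ε * B X := by
  obtain ⟨n, hn⟩ := exists_nat_gt (2 * c / ε)
  have hP : (0 : ℝ) < (n + 1 : ℕ) := by positivity
  have hc : c / (n + 1 : ℕ) ≤ ε / 2 := by
    rw [div_le_iff₀ hP]
    rw [div_lt_iff₀ hε] at hn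
    push_cast
    nlinarith
  obtain ⟨K, hK⟩ := hf (n + 1) n.succ_pos
  filter_upwards [hB.eventually_ge_atTop (2 * K / ε), hB.eventually_ge_atTop 0] with X hKX hX
  have hK' : K ≤ ε / 2 * B X := by
    rw [div_le_iff₀ hε] at hKX
    linarith
  calc f X ≤ K + c / (n + 1 : ℕ) * B X := hK X
    _ ≤ ε / 2 * B X + ε / 2 * B X := by gcongr
    _ = ε * B X := by ring

theorem stmt3_general (g : ℕ → ℂ)
    (hcs : IsCompletelyAdditive g ∨ IsStronglyAdditive g)
    (hB : Filter.Tendsto (Bg g) Filter.atTop Filter.atTop) :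
    ∀ ε : ℝ, 0 < ε → ∃ X₀ : ℝ, ∀ X : ℝ, X₀ ≤ X →
      ∑ q ∈ (ppows X).filter (fun q => ¬ q.Prime), ‖g q‖ ^ 2 / (q : ℝ)
        ≤ ε * (Bg g X) ^ 2 := by
  intro ε hε
  set C := 4 * ∑' k : ℕ, (k : ℝ) ^ 2 * (1 / 2) ^ k
  have hB2 : Tendsto (fun X => Bg g X ^ 2) atTop atTop := (tendsto_pow_atTop two_ne_zero).comp hB
  refine eventually_atTop.mp (eventually_le_mul_of_forall_le_add_div hB2 (c := C) (fun P hP =>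
    ⟨C * ∑ n ∈ range (P + 1), ‖g n‖ ^ 2 / n / n, fun X => ?_⟩) hε)
  calc _ ≤ C * ∑ p ∈ (ppows X).filter Nat.Prime, ‖g p‖ ^ 2 / p / p := sum_nonprime_ppows_le hcs X
    _ ≤ C * (∑ n ∈ range (P + 1), ‖g n‖ ^ 2 / n / n
          + (∑ p ∈ (ppows X).filter Nat.Prime, ‖g p‖ ^ 2 / p) / P) := by
      gcongr
      exact sum_div_le_sum_range_add_div _ (fun _ => by positivity) _ hP
    _ = C * ∑ n ∈ range (P + 1), ‖g n‖ ^ 2 / n / n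
          + C / P * ∑ p ∈ (ppows X).filter Nat.Prime, ‖g p‖ ^ 2 / p := by ring
    _ ≤ C * ∑ n ∈ range (P + 1), ‖g n‖ ^ 2 / n / n + C / P * Bg g X ^ 2 := by
      gcongr
      exact sum_prime_le_Bg_sq g X

/-- If `g` is completely or strongly additive and `B_g(X) → ∞`, then
`∑_{p^k ≤ X, k ≥ 2} |g(p^k)|² p^{-k} = o(B_g(X)²)` as `X → ∞`. -/
theorem stmt3 (g : ℕ → ℂ) (hg : IsAdditive g)
    (hcs : IsCompletelyAdditive g ∨ IsStronglyAdditive g)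
    (hB : Filter.Tendsto (Bg g) Filter.atTop Filter.atTop) :
    ∀ ε : ℝ, 0 < ε → ∃ X₀ : ℝ, ∀ X : ℝ, X₀ ≤ X →
      ∑ q ∈ (ppows X).filter (fun q => ¬ q.Prime), ‖g q‖ ^ 2 / (q : ℝ)
        ≤ ε * (Bg g X) ^ 2 :=
  stmt3_general g hcs hB
end

section
/- For any complex sequence {a(n)} and any X ≥ 2, one has ∑_{p,q primes, X^{1/4} < p,q ≤ X, p ≠ q} pq · |∑_{n ≤ X, pq | n} a(n) − (pq)^{-1} ∑_{n ≤ X} a(n)|² ≪ X ∑_{n ≤ X} |a(n)|², with an absolute implied constant. -/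
open Finset

/-!
With `S_d = ∑_{n ≤ X, d ∣ n} a n` and `T = ∑_{n ≤ X} a n`, the bound
`‖S_d - T/d‖² ≤ 2‖S_d‖² + 2‖T‖²/d²` for `d = pq` splits the sum in two. In the first part
Cauchy–Schwarz gives `d ‖S_d‖² ≤ X ∑_{n ≤ X, d ∣ n} ‖a n‖²`, and an integer `n ≤ X` has at most
four prime factors above `X^{1/4}`, so at most `16` of the products `pq` divide it.
In the second part `‖T‖² ≤ X ∑ ‖a n‖²`, and `∑ 1/(pq) ≤ (∑_{X^{1/4} < p ≤ X} 1/p)²`, where the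
last sum is at most `8` by the same count: `(X/2) ∑ 1/p ≤ ∑_p ⌊X/p⌋ ≤ 4X`.
-/

section DoubleCounting

variable {α β : Type*} {s : Finset α} {t : Finset β} {r : α → β → Prop} [∀ a b, Decidable (r a b)]

lemma sum_sum_filter_le_mul_sum {M : ℕ} (hM : ∀ b ∈ t, #{a ∈ s | r a b} ≤ M) {f : β → ℝ}
    (hf : ∀ b ∈ t, 0 ≤ f b) :
    ∑ a ∈ s, ∑ b ∈ t with r a b, f b ≤ M * ∑ b ∈ t, f b :=
  calc ∑ a ∈ s, ∑ b ∈ t with r a b, f b = ∑ b ∈ t, (#{a ∈ s | r a b} : ℝ) * f b := by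
        simpa only [bipartiteAbove, bipartiteBelow, sum_const, nsmul_eq_mul] using
          sum_sum_bipartiteAbove_eq_sum_sum_bipartiteBelow (s := s) (t := t) r fun _ b => f b
    _ ≤ ∑ b ∈ t, (M : ℝ) * f b :=
        sum_le_sum fun b hb => mul_le_mul_of_nonneg_right (by exact_mod_cast hM b hb) (hf b hb)
    _ = M * ∑ b ∈ t, f b := (mul_sum ..).symm

end DoubleCounting

lemma norm_sum_sq_le_card_mul {α : Type*} (s : Finset α) (f : α → ℂ) :
    ‖∑ i ∈ s, f i‖ ^ 2 ≤ #s * ∑ i ∈ s, ‖f i‖ ^ 2 :=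
  (pow_le_pow_left₀ (norm_nonneg _) (norm_sum_le _ _) 2).trans (sq_sum_le_card_mul_sum_sq ..)

lemma Icc_one_filter_dvd_card_eq_div (N d : ℕ) : #{n ∈ Icc 1 N | d ∣ n} = N / d :=
  Nat.Ioc_filter_dvd_card_eq_div N d

lemma natCast_mul_norm_sum_filter_dvd_sq_le (a : ℕ → ℂ) (N d : ℕ) :
    (d : ℝ) * ‖∑ n ∈ Icc 1 N with d ∣ n, a n‖ ^ 2 ≤ N * ∑ n ∈ Icc 1 N with d ∣ n, ‖a n‖ ^ 2 := by
  have hdN : (d : ℝ) * #{n ∈ Icc 1 N | d ∣ n} ≤ N := by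
    rw [Icc_one_filter_dvd_card_eq_div]; exact_mod_cast Nat.mul_div_le N d
  calc (d : ℝ) * ‖∑ n ∈ Icc 1 N with d ∣ n, a n‖ ^ 2
      ≤ d * (#{n ∈ Icc 1 N | d ∣ n} * ∑ n ∈ Icc 1 N with d ∣ n, ‖a n‖ ^ 2) := by
        gcongr; exact norm_sum_sq_le_card_mul ..
    _ ≤ N * ∑ n ∈ Icc 1 N with d ∣ n, ‖a n‖ ^ 2 := by
        rw [← mul_assoc]; gcongr

lemma sum_one_div_le_of_card_filter_dvd_le {D : Finset ℕ} {N M : ℕ} (hD : D ⊆ Icc 1 N)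
    (hM : ∀ n ∈ Icc 1 N, #{d ∈ D | d ∣ n} ≤ M) :
    ∑ d ∈ D, (1 : ℝ) / d ≤ 2 * M := by
  rcases Nat.eq_zero_or_pos N with rfl | hN
  · simp [subset_empty.1 hD]
  -- `d ≤ N` makes `⌊N/d⌋ ≥ 1`, hence `N/d ≤ 2 ⌊N/d⌋`.
  have hmultiples : ∀ d ∈ D, (N : ℝ) * (1 / d) ≤ 2 * #{n ∈ Icc 1 N | d ∣ n} := by
    intro d hd
    obtain ⟨hd1, hdN⟩ := mem_Icc.1 (hD hd)
    have hle : d ≤ d * (N / d) := Nat.le_mul_of_pos_right d (Nat.div_pos hdN hd1)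
    have hN : N ≤ 2 * (d * (N / d)) := by
      have := Nat.div_add_mod N d; have := Nat.mod_lt N hd1; omega
    rw [Icc_one_filter_dvd_card_eq_div, mul_one_div, div_le_iff₀ (by positivity)]
    exact_mod_cast (hN.trans_eq (by ring))
  have hcount : ∑ d ∈ D, ((#{n ∈ Icc 1 N | d ∣ n} : ℕ) : ℝ) ≤ M * N := by
    simpa only [sum_const, nsmul_eq_mul, mul_one, Nat.card_Icc, add_tsub_cancel_right] using
      sum_sum_filter_le_mul_sum (r := (· ∣ ·)) hM (f := fun _ => (1 : ℝ)) fun _ _ => zero_le_one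
  have : (N : ℝ) * ∑ d ∈ D, (1 : ℝ) / d ≤ N * (2 * M) := by
    rw [mul_sum]
    calc _ ≤ ∑ d ∈ D, 2 * (#{n ∈ Icc 1 N | d ∣ n} : ℝ) := sum_le_sum hmultiples
      _ ≤ N * (2 * M) := by rw [← mul_sum]; linarith
  exact le_of_mul_le_mul_left this (by exact_mod_cast hN)

lemma natCast_mul_norm_sub_one_div_mul_sq_le (k : ℕ) (S T : ℂ) :
    (k : ℝ) * ‖S - 1 / (k : ℂ) * T‖ ^ 2 ≤ 2 * (k * ‖S‖ ^ 2 + ‖T‖ ^ 2 / k) := by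
  rcases Nat.eq_zero_or_pos k with rfl | hk
  · simp
  have hk' : (0 : ℝ) < k := by exact_mod_cast hk
  have hT : ‖1 / (k : ℂ) * T‖ = ‖T‖ / k := by
    rw [norm_mul, norm_div, norm_one, Complex.norm_natCast, one_div_mul_eq_div]
  have hsq : ‖S - 1 / (k : ℂ) * T‖ ^ 2 ≤ 2 * (‖S‖ ^ 2 + (‖T‖ / k) ^ 2) :=
    (pow_le_pow_left₀ (norm_nonneg _) (hT ▸ norm_sub_le _ _) 2).trans add_sq_le
  calc (k : ℝ) * ‖S - 1 / (k : ℂ) * T‖ ^ 2 ≤ k * (2 * (‖S‖ ^ 2 + (‖T‖ / k) ^ 2)) := by gcongr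
    _ = 2 * (k * ‖S‖ ^ 2 + ‖T‖ ^ 2 / k) := by field_simp

theorem sum_natCast_mul_norm_sum_filter_dvd_sub_sq_le {ι : Type*} (P : Finset ι) (k : ι → ℕ)
    {N M : ℕ} (hM : ∀ n ∈ Icc 1 N, #{i ∈ P | k i ∣ n} ≤ M) (a : ℕ → ℂ) :
    ∑ i ∈ P, (k i : ℝ) *
        ‖∑ n ∈ Icc 1 N with k i ∣ n, a n - 1 / (k i : ℂ) * ∑ n ∈ Icc 1 N, a n‖ ^ 2
      ≤ 2 * (M + ∑ i ∈ P, (1 : ℝ) / k i) * N * ∑ n ∈ Icc 1 N, ‖a n‖ ^ 2 := by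
  set A := ∑ n ∈ Icc 1 N, ‖a n‖ ^ 2
  have hT : ‖∑ n ∈ Icc 1 N, a n‖ ^ 2 ≤ N * A := by
    simpa using norm_sum_sq_le_card_mul (Icc 1 N) a
  have hdiv : ∑ i ∈ P, ∑ n ∈ Icc 1 N with k i ∣ n, ‖a n‖ ^ 2 ≤ M * A :=
    sum_sum_filter_le_mul_sum (r := fun i n => k i ∣ n) hM fun _ _ => by positivity
  calc _ ≤ ∑ i ∈ P, 2 * (k i * ‖∑ n ∈ Icc 1 N with k i ∣ n, a n‖ ^ 2
          + ‖∑ n ∈ Icc 1 N, a n‖ ^ 2 / k i) :=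
        sum_le_sum fun i _ => natCast_mul_norm_sub_one_div_mul_sq_le ..
    _ = 2 * (∑ i ∈ P, k i * ‖∑ n ∈ Icc 1 N with k i ∣ n, a n‖ ^ 2
          + ‖∑ n ∈ Icc 1 N, a n‖ ^ 2 * ∑ i ∈ P, (1 : ℝ) / k i) := by
        rw [← mul_sum, sum_add_distrib, mul_sum P (fun i => (1 : ℝ) / k i)]
        simp only [mul_one_div]
    _ ≤ 2 * (∑ i ∈ P, N * ∑ n ∈ Icc 1 N with k i ∣ n, ‖a n‖ ^ 2
          + N * A * ∑ i ∈ P, (1 : ℝ) / k i) := by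
        gcongr 2 * (?_ + ?_)
        · exact sum_le_sum fun i _ => natCast_mul_norm_sum_filter_dvd_sq_le ..
        · exact mul_le_mul_of_nonneg_right hT (sum_nonneg fun _ _ => by positivity)
    _ ≤ 2 * (N * (M * A) + N * A * ∑ i ∈ P, (1 : ℝ) / k i) := by
        rw [← mul_sum]; gcongr
    _ = 2 * (M + ∑ i ∈ P, (1 : ℝ) / k i) * N * A := by ring

section ProductPairs

variable {P : Finset (ℕ × ℕ)} {L : Finset ℕ}

lemma card_filter_mul_dvd_le_sq (hP : P ⊆ L ×ˢ L) (n : ℕ) :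
    #{pq ∈ P | pq.1 * pq.2 ∣ n} ≤ #{p ∈ L | p ∣ n} ^ 2 := by
  rw [sq, ← card_product]
  refine card_le_card fun pq hpq => ?_
  obtain ⟨hpqP, hdvd⟩ := mem_filter.1 hpq
  obtain ⟨hp, hq⟩ := mem_product.1 (hP hpqP)
  exact mem_product.2 ⟨mem_filter.2 ⟨hp, dvd_of_mul_right_dvd hdvd⟩,
    mem_filter.2 ⟨hq, dvd_of_mul_left_dvd hdvd⟩⟩

lemma sum_one_div_mul_le_sq (hP : P ⊆ L ×ˢ L) :
    ∑ pq ∈ P, (1 : ℝ) / (pq.1 * pq.2 : ℕ) ≤ (∑ p ∈ L, (1 : ℝ) / p) ^ 2 :=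
  calc ∑ pq ∈ P, (1 : ℝ) / (pq.1 * pq.2 : ℕ) ≤ ∑ pq ∈ L ×ˢ L, (1 : ℝ) / (pq.1 * pq.2 : ℕ) :=
        sum_le_sum_of_subset_of_nonneg hP fun _ _ _ => by positivity
    _ = (∑ p ∈ L, (1 : ℝ) / p) ^ 2 := by
        rw [sq, sum_mul_sum, sum_product]; push_cast; simp only [one_div_mul_one_div]

end ProductPairs

lemma card_primeFactors_filter_lt_le {n m : ℕ} {Y : ℝ} (hn : n ≠ 0) (hY : 1 < Y)
    (hnY : (n : ℝ) ≤ Y ^ m) : #{p ∈ n.primeFactors | Y < (p : ℕ)} ≤ m := by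
  set Q := {p ∈ n.primeFactors | Y < (p : ℕ)}
  have hQn : ∏ p ∈ Q, p ≤ n :=
    Nat.le_of_dvd (Nat.pos_of_ne_zero hn)
      ((prod_dvd_prod_of_subset _ _ _ (filter_subset _ _)).trans (Nat.prod_primeFactors_dvd n))
  have hYQ : Y ^ #Q ≤ n :=
    calc Y ^ #Q = ∏ _p ∈ Q, Y := (prod_const Y).symm
      _ ≤ ∏ p ∈ Q, (p : ℝ) :=
        prod_le_prod (fun _ _ => by positivity) fun p hp => (mem_filter.1 hp).2.le
      _ ≤ n := by rw [← Nat.cast_prod]; exact_mod_cast hQn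
  exact (pow_le_pow_iff_right₀ hY).1 (hYQ.trans hnY)

lemma card_filter_dvd_le_of_forall_prime_lt {L : Finset ℕ} {n m : ℕ} {Y : ℝ}
    (hL : ∀ p ∈ L, p.Prime ∧ Y < p) (hn : n ≠ 0) (hY : 1 < Y) (hnY : (n : ℝ) ≤ Y ^ m) :
    #{p ∈ L | p ∣ n} ≤ m := by
  refine (card_le_card fun p hp => ?_).trans (card_primeFactors_filter_lt_le hn hY hnY)
  obtain ⟨hpL, hpn⟩ := mem_filter.1 hp
  exact mem_filter.2 ⟨Nat.mem_primeFactors.2 ⟨(hL p hpL).1, hpn, hn⟩, (hL p hpL).2⟩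

/-- Dual Turán–Kubilius type inequality for products of two distinct large primes. -/
theorem stmt6 :
    ∃ C : ℝ, 0 < C ∧ ∀ (a : ℕ → ℂ) (X : ℝ), 2 ≤ X →
      ∑ pq ∈ ((Finset.Icc 1 ⌊X⌋₊ ×ˢ Finset.Icc 1 ⌊X⌋₊).filter
          (fun pq : ℕ × ℕ => pq.1.Prime ∧ pq.2.Prime ∧ pq.1 ≠ pq.2 ∧
            X ^ ((1 : ℝ) / 4) < (pq.1 : ℝ) ∧ X ^ ((1 : ℝ) / 4) < (pq.2 : ℝ))),
        (pq.1 * pq.2 : ℝ) *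
          ‖(∑ n ∈ (Finset.Icc 1 ⌊X⌋₊).filter (fun n => pq.1 * pq.2 ∣ n), a n)
            - (1 / ((pq.1 : ℂ) * (pq.2 : ℂ))) * ∑ n ∈ Finset.Icc 1 ⌊X⌋₊, a n‖ ^ 2
        ≤ C * X * ∑ n ∈ Finset.Icc 1 ⌊X⌋₊, ‖a n‖ ^ 2 := by
  refine ⟨160, by norm_num, fun a X hX => ?_⟩
  set N := ⌊X⌋₊
  set Y := X ^ ((1 : ℝ) / 4)
  set P : Finset (ℕ × ℕ) := {pq ∈ Icc 1 N ×ˢ Icc 1 N |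
    pq.1.Prime ∧ pq.2.Prime ∧ pq.1 ≠ pq.2 ∧ Y < pq.1 ∧ Y < pq.2}
  set L : Finset ℕ := {p ∈ Icc 1 N | p.Prime ∧ Y < p}
  have hY : 1 < Y := Real.one_lt_rpow (by linarith) (by norm_num)
  have hNX : (N : ℝ) ≤ X := Nat.floor_le (by linarith)
  have hL : ∀ n ∈ Icc 1 N, #{p ∈ L | p ∣ n} ≤ 4 := fun n hn =>
    card_filter_dvd_le_of_forall_prime_lt (fun p hp => (mem_filter.1 hp).2)
      (Nat.one_le_iff_ne_zero.1 (mem_Icc.1 hn).1) hY <| by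
        rw [← Real.rpow_natCast, ← Real.rpow_mul (by linarith)]
        norm_num [(Nat.cast_le.2 (mem_Icc.1 hn).2).trans hNX]
  have hPL : P ⊆ L ×ˢ L := fun pq hpq => by
    simp only [P, L, mem_filter, mem_product] at hpq ⊢
    obtain ⟨⟨hp, hq⟩, hp', hq', -, hYp, hYq⟩ := hpq
    exact ⟨⟨hp, hp', hYp⟩, ⟨hq, hq', hYq⟩⟩
  have hrecip : ∑ pq ∈ P, (1 : ℝ) / (pq.1 * pq.2 : ℕ) ≤ 8 ^ 2 :=
    (sum_one_div_mul_le_sq hPL).trans <| pow_le_pow_left₀ (sum_nonneg fun _ _ => by positivity)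
      ((sum_one_div_le_of_card_filter_dvd_le (filter_subset _ _) hL).trans (by norm_num)) 2
  calc _ = ∑ pq ∈ P, ((pq.1 * pq.2 : ℕ) : ℝ) * ‖∑ n ∈ Icc 1 N with pq.1 * pq.2 ∣ n, a n
          - 1 / ((pq.1 * pq.2 : ℕ) : ℂ) * ∑ n ∈ Icc 1 N, a n‖ ^ 2 := by push_cast; rfl
    _ ≤ 2 * (16 + ∑ pq ∈ P, (1 : ℝ) / (pq.1 * pq.2 : ℕ)) * N * ∑ n ∈ Icc 1 N, ‖a n‖ ^ 2 :=
        sum_natCast_mul_norm_sum_filter_dvd_sub_sq_le _ _ (fun n hn =>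
          (card_filter_mul_dvd_le_sq hPL n).trans (Nat.pow_le_pow_left (hL n hn) 2)) a
    _ ≤ 2 * (16 + 8 ^ 2) * X * ∑ n ∈ Icc 1 N, ‖a n‖ ^ 2 := by gcongr
    _ = 160 * X * ∑ n ∈ Icc 1 N, ‖a n‖ ^ 2 := by norm_num
end

section
/- Let g: ℕ → ℝ be additive with g(0) := 0, let 𝓑(X) := {n ≤ X : g(n) < g(n−1)}. Then (1/X) ∑_{n ≤ X} |g(n) − g(n−1)| ≪ ( (|𝓑(X)|/X)^{1/2} + (log X)/√X ) · B_g(X), with an absolute implied constant. -/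
open Finset

/-- `A_g(Y) = ∑_{p^k ≤ Y} g(p^k) p^{-k} (1 - 1/p)` for real-valued `g`. -/
noncomputable def AgR (g : ℕ → ℝ) (Y : ℝ) : ℝ :=
  ∑ q ∈ ppows Y, g q * (1 / (q : ℝ)) * (1 - 1 / ((q.minFac : ℝ)))

/-- `B_g(Y) = (∑_{p^k ≤ Y} g(p^k)² p^{-k})^{1/2}` for real-valued `g`. -/
noncomputable def BgR (g : ℕ → ℝ) (Y : ℝ) : ℝ :=
  Real.sqrt (∑ q ∈ ppows Y, (g q) ^ 2 / (q : ℝ))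

/-- `g` is additive: `g(mn) = g(m) + g(n)` whenever `gcd(m,n) = 1`. -/
def IsAdditiveR (g : ℕ → ℝ) : Prop :=
  ∀ m n : ℕ, Nat.Coprime m n → g (m * n) = g m + g n

/-!
Write `|g n - g (n - 1)| = (g n - g (n - 1)) + 2 (g (n - 1) - g n) 1[n ∈ 𝓑]`. The signed sum
telescopes to `g N` (`N = ⌊X⌋`), and Cauchy–Schwarz over the prime powers exactly dividing `N`,
whose sum is at most their product `N`, gives `|g N| ≤ B_g(N) √N`. On `𝓑` we bound
`g (n - 1) - g n ≤ |g (n - 1) - c| + |g n - c|` and apply Cauchy–Schwarz against a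
Turán–Kubilius inequality `∑_{n ≤ N} (g n - c)² ≪ N B_g(N)²`.

For Turán–Kubilius, expand `g n = ∑_{q ≤ N} g(q) 1[q ∥ n]` over prime powers. Two distinct prime
powers `q, q' > √N` never exactly divide the same `n ≤ N`, so that part is an orthogonal sum. For
`q, q' ≤ √N` the covariance of `1[q ∥ n]` and `1[q' ∥ n]` over `n ≤ N` is `O(1)` when `q, q'` are
powers of distinct primes (the densities multiply exactly, only rounding errors remain), and
`O(N / (q q'))`, plus `N / q` on the diagonal, when they are powers of the same prime; the first
kind is summed by Cauchy–Schwarz using `∑_{q ≤ √N} q ≤ N`, the second by a Schur test using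
`∑_k p^{-k} ≤ 1`.
-/

lemma IsAdditiveR.map_one {g : ℕ → ℝ} (hg : IsAdditiveR g) : g 1 = 0 := by
  simpa using hg 1 1 (Nat.coprime_one_left 1)

lemma IsAdditiveR.eq_sum_primeFactors {g : ℕ → ℝ} (hg : IsAdditiveR g) {n : ℕ} (hn : n ≠ 0) :
    g n = ∑ p ∈ n.primeFactors, g (p ^ n.factorization p) := by
  have h := Nat.multiplicative_factorization (fun m => Multiplicative.ofAdd (g m))
    (fun x y hxy => by rw [hg x y hxy, ofAdd_add]) (by simp [hg.map_one]) hn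
  simpa [Finsupp.prod, Nat.support_factorization] using congrArg Multiplicative.toAdd h

lemma mem_ppows_natCast {N q : ℕ} : q ∈ ppows N ↔ IsPrimePow q ∧ q ≤ N := by
  simp only [ppows, mem_filter, mem_Icc, Nat.floor_natCast]
  exact ⟨fun h => ⟨h.2, h.1.2⟩, fun h => ⟨⟨h.1.two_le, h.2⟩, h.1⟩⟩

lemma ppows_natFloor (X : ℝ) : ppows (⌊X⌋₊ : ℝ) = ppows X := by
  simp [ppows]

lemma BgR_nonneg (g : ℕ → ℝ) (Y : ℝ) : 0 ≤ BgR g Y := Real.sqrt_nonneg _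

lemma BgR_sq (g : ℕ → ℝ) (Y : ℝ) : BgR g Y ^ 2 = ∑ q ∈ ppows Y, g q ^ 2 / q :=
  Real.sq_sqrt (sum_nonneg fun _ _ => by positivity)

lemma sum_sq_div_le_BgR_sq (g : ℕ → ℝ) {Y : ℝ} {s : Finset ℕ} (hs : s ⊆ ppows Y) :
    ∑ q ∈ s, g q ^ 2 / q ≤ BgR g Y ^ 2 := by
  rw [BgR_sq]
  exact sum_le_sum_of_subset_of_nonneg hs fun _ _ _ => by positivity

lemma pow_factorization_injOn_primeFactors (n : ℕ) :
    Set.InjOn (fun p => p ^ n.factorization p) n.primeFactors := by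
  intro p hp p' hp' h
  obtain ⟨hp, hpn, hn⟩ := Nat.mem_primeFactors.1 hp
  obtain ⟨hp', hpn', -⟩ := Nat.mem_primeFactors.1 hp'
  have := congrArg Nat.minFac h
  simp only at this
  rwa [hp.pow_minFac (hp.factorization_pos_of_dvd hn hpn).ne',
    hp'.pow_minFac (hp'.factorization_pos_of_dvd hn hpn').ne'] at this

lemma pow_factorization_mem_ppows {N n p : ℕ} (hp : p ∈ n.primeFactors) (hnN : n ≤ N) :
    p ^ n.factorization p ∈ ppows N := by
  obtain ⟨hp, hpn, hn⟩ := Nat.mem_primeFactors.1 hp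
  rw [mem_ppows_natCast]
  exact ⟨(isPrimePow_pow_iff (hp.factorization_pos_of_dvd hn hpn).ne').2 hp.isPrimePow,
    (Nat.ordProj_le p hn).trans hnN⟩

lemma sum_le_prod_of_two_le {s : Finset ℕ} {f : ℕ → ℕ} (hf : ∀ i ∈ s, 2 ≤ f i) :
    ∑ i ∈ s, f i ≤ ∏ i ∈ s, f i := by
  induction s using Finset.induction with
  | empty => simp
  | insert a s ha ih =>
    rw [sum_insert ha, prod_insert ha]
    rcases s.eq_empty_or_nonempty with rfl | ⟨b, hb⟩
    · simp
    have ha2 : 2 ≤ f a := hf a (mem_insert_self a s)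
    have hs2 : 2 ≤ ∏ i ∈ s, f i := (hf b (mem_insert_of_mem hb)).trans <|
      single_le_prod' (fun i hi => one_le_two.trans (hf i (mem_insert_of_mem hi))) hb
    have := ih fun i hi => hf i (mem_insert_of_mem hi)
    nlinarith

lemma sq_sum_abs_le_sum_sq_div_mul_sum {ι : Type*} (s : Finset ι) (a : ι → ℝ) {w : ι → ℝ}
    (hw : ∀ i ∈ s, 0 < w i) :
    (∑ i ∈ s, |a i|) ^ 2 ≤ (∑ i ∈ s, a i ^ 2 / w i) * ∑ i ∈ s, w i :=
  sum_sq_le_sum_mul_sum_of_sq_le_mul s (fun i hi => div_nonneg (sq_nonneg _) (hw i hi).le)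
    (fun i hi => (hw i hi).le) fun i hi => by rw [sq_abs, div_mul_cancel₀ _ (hw i hi).ne']

lemma IsAdditiveR.abs_le_BgR_mul_sqrt {g : ℕ → ℝ} (hg : IsAdditiveR g) {n : ℕ} (hn : n ≠ 0) :
    |g n| ≤ BgR g n * √n := by
  set q : ℕ → ℕ := fun p => p ^ n.factorization p
  have hq : ∀ p ∈ n.primeFactors, 2 ≤ q p := fun p hp =>
    (mem_ppows_natCast.1 (pow_factorization_mem_ppows hp le_rfl)).1.two_le
  have hq0 : ∀ p ∈ n.primeFactors, (0 : ℝ) < q p := fun p hp => by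
    have := hq p hp; positivity
  have hsum : ∑ p ∈ n.primeFactors, (q p : ℝ) ≤ n := by
    exact_mod_cast (sum_le_prod_of_two_le hq).trans (Nat.prod_primeFactors_pow_factorization hn).ge
  have hB : ∑ p ∈ n.primeFactors, g (q p) ^ 2 / q p ≤ BgR g n ^ 2 := by
    rw [← sum_image (f := fun q : ℕ => g q ^ 2 / q) (pow_factorization_injOn_primeFactors n)]
    refine sum_sq_div_le_BgR_sq g fun r hr => ?_
    obtain ⟨p, hp, rfl⟩ := mem_image.1 hr
    exact pow_factorization_mem_ppows hp le_rfl
  calc |g n| ≤ √((BgR g n) ^ 2 * n) := by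
        refine Real.abs_le_sqrt ?_
        rw [hg.eq_sum_primeFactors hn, ← sq_abs]
        calc |∑ p ∈ n.primeFactors, g (q p)| ^ 2 ≤ (∑ p ∈ n.primeFactors, |g (q p)|) ^ 2 :=
              pow_le_pow_left₀ (abs_nonneg _) (abs_sum_le_sum_abs _ _) 2
          _ ≤ (∑ p ∈ n.primeFactors, g (q p) ^ 2 / q p) * ∑ p ∈ n.primeFactors, (q p : ℝ) :=
              sq_sum_abs_le_sum_sq_div_mul_sum _ _ hq0
          _ ≤ BgR g n ^ 2 * n := mul_le_mul hB hsum (sum_nonneg fun p hp => (hq0 p hp).le)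
              (sq_nonneg _)
    _ = BgR g n * √n := by
        rw [Real.sqrt_mul' _ n.cast_nonneg, Real.sqrt_sq (BgR_nonneg g n)]

noncomputable def dvdInd (m n : ℕ) : ℝ := if m ∣ n then 1 else 0

/-- For a prime power `q = p ^ k`, the indicator of `p ^ k ∥ n`. -/
noncomputable def exactInd (q n : ℕ) : ℝ := dvdInd q n - dvdInd (q * q.minFac) n

/-- `q⁻¹ (1 - p⁻¹)` for `q = p ^ k`: the density of `exactInd q`, as in `A_g`. -/
noncomputable def exactDensity (q : ℕ) : ℝ := (q : ℝ)⁻¹ - ((q * q.minFac : ℕ) : ℝ)⁻¹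

lemma dvdInd_mul_dvdInd {a b : ℕ} (h : a.Coprime b) (n : ℕ) :
    dvdInd a n * dvdInd b n = dvdInd (a * b) n := by
  have hab : a * b ∣ n ↔ a ∣ n ∧ b ∣ n :=
    ⟨fun hab => ⟨dvd_of_mul_right_dvd hab, dvd_of_mul_left_dvd hab⟩,
      fun ⟨ha, hb⟩ => h.mul_dvd_of_dvd_of_dvd ha hb⟩
  simp only [dvdInd, hab, ite_and]
  split_ifs <;> simp

lemma sum_dvdInd (N m : ℕ) : ∑ n ∈ Icc 1 N, dvdInd m n = (N / m : ℕ) := by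
  simp only [dvdInd, sum_boole, ← Nat.Ioc_filter_dvd_card_eq_div]
  rfl

lemma abs_sum_dvdInd_sub_le (N : ℕ) {m : ℕ} (hm : m ≠ 0) :
    |∑ n ∈ Icc 1 N, dvdInd m n - N / m| ≤ 1 := by
  rw [sum_dvdInd, abs_sub_comm, abs_of_nonneg (sub_nonneg.2 Nat.cast_div_le)]
  have := Nat.lt_div_mul_add (a := N) (Nat.pos_of_ne_zero hm)
  have hm' : (0 : ℝ) < m := by positivity
  rw [sub_le_iff_le_add, div_le_iff₀ hm']
  exact_mod_cast (by nlinarith : N ≤ (1 + N / m) * m)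

lemma exactInd_eq_ite (q n : ℕ) :
    exactInd q n = if q ∣ n ∧ ¬ q * q.minFac ∣ n then 1 else 0 := by
  by_cases h : q * q.minFac ∣ n
  · simp [exactInd, dvdInd, h, (Dvd.intro _ rfl).trans h]
  · simp [exactInd, dvdInd, h]

lemma exactInd_nonneg (q n : ℕ) : 0 ≤ exactInd q n := by
  rw [exactInd_eq_ite]; positivity

lemma exactInd_mul_self (q n : ℕ) : exactInd q n * exactInd q n = exactInd q n := by
  rw [exactInd_eq_ite]; split_ifs <;> norm_num

lemma exactInd_prime_pow {p k n : ℕ} (hp : p.Prime) (hk : k ≠ 0) (hn : n ≠ 0) :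
    exactInd (p ^ k) n = if n.factorization p = k then 1 else 0 := by
  simp only [exactInd_eq_ite, hp.pow_minFac hk, ← pow_succ, hp.pow_dvd_iff_le_factorization hn]
  split_ifs <;> first | rfl | omega

lemma exactInd_mul_exactInd_of_minFac_eq {q q' : ℕ} (hq : IsPrimePow q) (hq' : IsPrimePow q')
    (hne : q ≠ q') (h : q.minFac = q'.minFac) (n : ℕ) : exactInd q n * exactInd q' n = 0 := by
  obtain ⟨p, k, hp, hk, rfl⟩ := (isPrimePow_nat_iff q).1 hq
  obtain ⟨p', j, hp', hj, rfl⟩ := (isPrimePow_nat_iff q').1 hq'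
  rw [hp.pow_minFac hk.ne', hp'.pow_minFac hj.ne'] at h
  subst h
  rcases eq_or_ne n 0 with rfl | hn
  · simp [exactInd, dvdInd]
  rw [exactInd_prime_pow hp hk.ne' hn, exactInd_prime_pow hp hj.ne' hn]
  split_ifs <;> simp_all

lemma coprime_mul_minFac {q q' : ℕ} (hq : IsPrimePow q) (hq' : IsPrimePow q')
    (h : q.minFac ≠ q'.minFac) : (q * q.minFac).Coprime (q' * q'.minFac) := by
  obtain ⟨p, k, hp, hk, rfl⟩ := (isPrimePow_nat_iff q).1 hq
  obtain ⟨p', j, hp', hj, rfl⟩ := (isPrimePow_nat_iff q').1 hq'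
  rw [hp.pow_minFac hk.ne', hp'.pow_minFac hj.ne'] at h ⊢
  rw [← pow_succ, ← pow_succ]
  exact Nat.Coprime.pow _ _ ((Nat.coprime_primes hp hp').2 h)

lemma exactInd_mul_exactInd_eq_zero_of_lt {N n q q' : ℕ} (hq : IsPrimePow q)
    (hq' : IsPrimePow q') (hne : q ≠ q') (hqN : N < q * q) (hqN' : N < q' * q') (hn : n ≤ N) :
    exactInd q n * exactInd q' n = 0 := by
  by_cases h : q.minFac = q'.minFac
  · exact exactInd_mul_exactInd_of_minFac_eq hq hq' hne h n
  have hcop : q.Coprime q' := ((coprime_mul_minFac hq hq' h).coprime_dvd_left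
    (dvd_mul_right _ _)).coprime_dvd_right (dvd_mul_right _ _)
  rw [exactInd_eq_ite, exactInd_eq_ite]
  split_ifs with h₁ h₂ <;> try simp
  have hn0 : n ≠ 0 := by rintro rfl; exact h₁.2 (dvd_zero _)
  have hqq : q * q' ≤ N :=
    (Nat.le_of_dvd (Nat.pos_of_ne_zero hn0) (hcop.mul_dvd_of_dvd_of_dvd h₁.1 h₂.1)).trans hn
  have := Nat.mul_lt_mul'' hqN hqN'
  nlinarith [Nat.mul_le_mul hqq hqq]

lemma IsAdditiveR.eq_sum_ppows_mul_exactInd {g : ℕ → ℝ} (hg : IsAdditiveR g) {N n : ℕ}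
    (hn : n ≠ 0) (hnN : n ≤ N) : g n = ∑ q ∈ ppows N, g q * exactInd q n := by
  have hE : n.primeFactors.image (fun p => p ^ n.factorization p) ⊆ ppows N := by
    intro q hq
    obtain ⟨p, hp, rfl⟩ := mem_image.1 hq
    exact pow_factorization_mem_ppows hp hnN
  rw [← sum_subset hE, sum_image (pow_factorization_injOn_primeFactors n),
    hg.eq_sum_primeFactors hn]
  · refine sum_congr rfl fun p hp => ?_
    obtain ⟨hp, hpn, -⟩ := Nat.mem_primeFactors.1 hp
    rw [exactInd_prime_pow hp (hp.factorization_pos_of_dvd hn hpn).ne' hn, if_pos rfl, mul_one]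
  · intro q hq hqE
    obtain ⟨p, k, hp, hk, rfl⟩ := (isPrimePow_nat_iff q).1 (mem_ppows_natCast.1 hq).1
    rw [exactInd_prime_pow hp hk.ne' hn, if_neg, mul_zero]
    rintro rfl
    exact hqE (mem_image.2 ⟨p, Nat.mem_primeFactors.2
      ⟨hp, Nat.dvd_of_factorization_pos hk.ne', hn⟩, rfl⟩)

lemma exactDensity_nonneg (q : ℕ) : 0 ≤ exactDensity q := by
  rcases eq_or_ne q 0 with rfl | hq
  · simp [exactDensity]
  exact sub_nonneg.2 <| inv_anti₀ (by positivity) <|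
    Nat.cast_le.2 (Nat.le_mul_of_pos_right q q.minFac_pos)

lemma exactDensity_le (q : ℕ) : exactDensity q ≤ (q : ℝ)⁻¹ :=
  sub_le_self _ (inv_nonneg.2 (Nat.cast_nonneg _))

lemma exactDensity_le_one (q : ℕ) : exactDensity q ≤ 1 := by
  refine (exactDensity_le q).trans ?_
  rcases eq_or_ne q 0 with rfl | hq
  · simp
  exact inv_le_one_of_one_le₀ (Nat.one_le_cast.2 (Nat.one_le_iff_ne_zero.2 hq))

lemma sum_exactInd_nonneg (N q : ℕ) : 0 ≤ ∑ n ∈ Icc 1 N, exactInd q n :=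
  sum_nonneg fun n _ => exactInd_nonneg q n

lemma sum_exactInd_le (N q : ℕ) : ∑ n ∈ Icc 1 N, exactInd q n ≤ N / q := by
  simp only [exactInd, sum_sub_distrib, sum_dvdInd]
  exact (sub_le_self _ (Nat.cast_nonneg _)).trans Nat.cast_div_le

lemma abs_sum_exactInd_sub_le (N : ℕ) {q : ℕ} (hq : q ≠ 0) :
    |∑ n ∈ Icc 1 N, exactInd q n - N * exactDensity q| ≤ 2 := by
  have h₁ := abs_sum_dvdInd_sub_le N hq
  have h₂ := abs_sum_dvdInd_sub_le N (mul_ne_zero hq q.minFac_pos.ne')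
  have : ∑ n ∈ Icc 1 N, exactInd q n - N * exactDensity q
      = (∑ n ∈ Icc 1 N, dvdInd q n - N / q)
        - (∑ n ∈ Icc 1 N, dvdInd (q * q.minFac) n - N / (q * q.minFac : ℕ)) := by
    simp only [exactInd, exactDensity, sum_sub_distrib]
    ring
  rw [this]
  exact (abs_sub _ _).trans (by linarith)

noncomputable def exactCov (N q q' : ℕ) : ℝ :=
  ∑ n ∈ Icc 1 N, (exactInd q n - exactDensity q) * (exactInd q' n - exactDensity q')

lemma exactCov_eq (N q q' : ℕ) :
    exactCov N q q' = ∑ n ∈ Icc 1 N, exactInd q n * exactInd q' n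
      - exactDensity q' * ∑ n ∈ Icc 1 N, exactInd q n
      - exactDensity q * ∑ n ∈ Icc 1 N, exactInd q' n + N * (exactDensity q * exactDensity q') := by
  have h : ∀ n, (exactInd q n - exactDensity q) * (exactInd q' n - exactDensity q')
      = exactInd q n * exactInd q' n - exactDensity q' * exactInd q n
        - exactDensity q * exactInd q' n + exactDensity q * exactDensity q' := fun n => by ring
  simp only [exactCov, h, sum_add_distrib, sum_sub_distrib, ← mul_sum, sum_const, Nat.card_Icc,
    nsmul_eq_mul, add_tsub_cancel_right]
  ring

lemma abs_sum_exactInd_mul_exactInd_sub_le (N : ℕ) {q q' : ℕ} (hq : q ≠ 0) (hq' : q' ≠ 0)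
    (h : (q * q.minFac).Coprime (q' * q'.minFac)) :
    |∑ n ∈ Icc 1 N, exactInd q n * exactInd q' n - N * (exactDensity q * exactDensity q')| ≤ 4 := by
  set b := q * q.minFac
  set b' := q' * q'.minFac
  have hb : b ≠ 0 := mul_ne_zero hq q.minFac_pos.ne'
  have hb' : b' ≠ 0 := mul_ne_zero hq' q'.minFac_pos.ne'
  have hprod : ∀ n, exactInd q n * exactInd q' n = dvdInd (q * q') n - dvdInd (q * b') n
      - dvdInd (b * q') n + dvdInd (b * b') n := fun n => by
    simp only [exactInd, sub_mul, mul_sub]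
    rw [dvdInd_mul_dvdInd ((h.coprime_dvd_left (dvd_mul_right _ _)).coprime_dvd_right
        (dvd_mul_right _ _)), dvdInd_mul_dvdInd (h.coprime_dvd_left (dvd_mul_right _ _)),
      dvdInd_mul_dvdInd (h.coprime_dvd_right (dvd_mul_right _ _)), dvdInd_mul_dvdInd h]
    ring
  have hρ : (N : ℝ) * (exactDensity q * exactDensity q') = N / (q * q' : ℕ)
      - N / (q * b' : ℕ) - N / (b * q' : ℕ) + N / (b * b' : ℕ) := by
    simp only [exactDensity, b, b', Nat.cast_mul]
    ring
  have e₁ := abs_le.1 (abs_sum_dvdInd_sub_le N (mul_ne_zero hq hq'))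
  have e₂ := abs_le.1 (abs_sum_dvdInd_sub_le N (mul_ne_zero hq hb'))
  have e₃ := abs_le.1 (abs_sum_dvdInd_sub_le N (mul_ne_zero hb hq'))
  have e₄ := abs_le.1 (abs_sum_dvdInd_sub_le N (mul_ne_zero hb hb'))
  simp only [hprod, sum_add_distrib, sum_sub_distrib, hρ]
  exact abs_le.2 ⟨by linarith, by linarith⟩

lemma abs_exactCov_le_of_coprime (N : ℕ) {q q' : ℕ} (hq : q ≠ 0) (hq' : q' ≠ 0)
    (h : (q * q.minFac).Coprime (q' * q'.minFac)) : |exactCov N q q'| ≤ 8 := by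
  have hm := abs_le.1 (abs_sum_exactInd_mul_exactInd_sub_le N hq hq' h)
  have h₁ := abs_le.1 (abs_sum_exactInd_sub_le N hq)
  have h₂ := abs_le.1 (abs_sum_exactInd_sub_le N hq')
  have hρ₁ := exactDensity_nonneg q
  have hρ₁' := exactDensity_le_one q
  have hρ₂ := exactDensity_nonneg q'
  have hρ₂' := exactDensity_le_one q'
  rw [exactCov_eq, abs_le]
  constructor <;> nlinarith

lemma exactDensity_mul_sum_exactInd_le (N q q' : ℕ) :
    exactDensity q' * ∑ n ∈ Icc 1 N, exactInd q n ≤ N / (q * q') := by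
  rw [show (N : ℝ) / (q * q') = (q' : ℝ)⁻¹ * (N / q) by ring]
  exact mul_le_mul (exactDensity_le q') (sum_exactInd_le N q) (sum_exactInd_nonneg N q)
    (by positivity)

lemma abs_exactCov_le_of_minFac_eq (N : ℕ) {q q' : ℕ} (hq : IsPrimePow q) (hq' : IsPrimePow q')
    (h : q.minFac = q'.minFac) :
    |exactCov N q q'| ≤ (if q = q' then (N : ℝ) / q else 0) + 2 * N / (q * q') := by
  have hdiag : ∑ n ∈ Icc 1 N, exactInd q n * exactInd q' n
      = if q = q' then ∑ n ∈ Icc 1 N, exactInd q n else 0 := by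
    split_ifs with hqq
    · subst hqq
      simp only [exactInd_mul_self]
    · exact sum_eq_zero fun n _ => exactInd_mul_exactInd_of_minFac_eq hq hq' hqq h n
  have hdiag₀ : 0 ≤ ∑ n ∈ Icc 1 N, exactInd q n * exactInd q' n :=
    sum_nonneg fun n _ => mul_nonneg (exactInd_nonneg q n) (exactInd_nonneg q' n)
  have hdiag₁ : ∑ n ∈ Icc 1 N, exactInd q n * exactInd q' n
      ≤ if q = q' then (N : ℝ) / q else 0 := by
    rw [hdiag]
    split_ifs
    exacts [sum_exactInd_le N q, le_rfl]
  have t₁ := exactDensity_mul_sum_exactInd_le N q q'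
  have t₂ := exactDensity_mul_sum_exactInd_le N q' q
  rw [mul_comm (q' : ℝ)] at t₂
  have t₃ : N * (exactDensity q * exactDensity q') ≤ N / (q * q') := by
    rw [div_eq_mul_inv, mul_inv]
    exact mul_le_mul_of_nonneg_left (mul_le_mul (exactDensity_le q) (exactDensity_le q')
      (exactDensity_nonneg q') (by positivity)) (Nat.cast_nonneg N)
  have s₁ := mul_nonneg (exactDensity_nonneg q') (sum_exactInd_nonneg N q)
  have s₂ := mul_nonneg (exactDensity_nonneg q) (sum_exactInd_nonneg N q')
  have s₃ := mul_nonneg (Nat.cast_nonneg (α := ℝ) N)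
    (mul_nonneg (exactDensity_nonneg q) (exactDensity_nonneg q'))
  rw [exactCov_eq, abs_le, mul_div_assoc]
  constructor <;> linarith

noncomputable def covKernel (N q q' : ℕ) : ℝ :=
  (if q = q' then (N : ℝ) / q else 0) + if q.minFac = q'.minFac then 2 * (N : ℝ) / (q * q') else 0

lemma covKernel_nonneg (N q q' : ℕ) : 0 ≤ covKernel N q q' := by
  unfold covKernel
  split_ifs <;> positivity

lemma covKernel_comm (N q q' : ℕ) : covKernel N q q' = covKernel N q' q := by
  unfold covKernel
  split_ifs <;> simp_all [mul_comm]

lemma abs_exactCov_le (N : ℕ) {q q' : ℕ} (hq : IsPrimePow q) (hq' : IsPrimePow q') :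
    |exactCov N q q'| ≤ covKernel N q q' + 8 := by
  by_cases h : q.minFac = q'.minFac
  · have := abs_exactCov_le_of_minFac_eq N hq hq' h
    simp only [covKernel, h, if_true]
    linarith
  · linarith [abs_exactCov_le_of_coprime N hq.pos.ne' hq'.pos.ne' (coprime_mul_minFac hq hq' h),
      covKernel_nonneg N q q']

lemma sum_inv_le_one_of_minFac_eq {p : ℕ} (hp : p.Prime) {t : Finset ℕ}
    (ht : ∀ q ∈ t, IsPrimePow q ∧ q.minFac = p) : ∑ q ∈ t, (q : ℝ)⁻¹ ≤ 1 := by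
  have hpow : ∀ q ∈ t, p ^ q.factorization p = q := fun q hq =>
    (ht q hq).2 ▸ (ht q hq).1.minFac_pow_factorization_eq
  have hk : ∀ q ∈ t, 1 ≤ q.factorization p := fun q hq => Nat.pos_of_ne_zero fun h0 => by
    have := (ht q hq).1.two_le
    rw [← hpow q hq, h0, pow_zero] at this
    omega
  have hx : (p : ℝ)⁻¹ ≤ 1 / 2 := by
    rw [one_div]; exact inv_anti₀ two_pos (by exact_mod_cast hp.two_le)
  calc ∑ q ∈ t, (q : ℝ)⁻¹ = ∑ k ∈ t.image (·.factorization p), (p : ℝ)⁻¹ ^ k := by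
        rw [sum_image fun q hq q' hq' h => by
          rw [← hpow q hq, ← hpow q' hq']; exact congrArg (p ^ ·) h]
        refine sum_congr rfl fun q hq => ?_
        rw [inv_pow, ← Nat.cast_pow, hpow q hq]
    _ ≤ ∑ k ∈ Ico 1 (t.sup (·.factorization p) + 1), (p : ℝ)⁻¹ ^ k := by
        refine sum_le_sum_of_subset_of_nonneg (fun k hk' => ?_) fun _ _ _ => by positivity
        obtain ⟨q, hq, rfl⟩ := mem_image.1 hk'
        exact mem_Ico.2 ⟨hk q hq, Nat.lt_succ_of_le (le_sup (f := (·.factorization p)) hq)⟩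
    _ ≤ (p : ℝ)⁻¹ ^ 1 / (1 - (p : ℝ)⁻¹) :=
        geom_sum_Ico_le_of_lt_one (by positivity) (by linarith)
    _ ≤ 1 := by
        rw [pow_one, div_le_one (by linarith)]
        linarith

lemma sum_covKernel_le (N : ℕ) {s : Finset ℕ} (hs : ∀ q ∈ s, IsPrimePow q) {q : ℕ} (hq : q ∈ s) :
    ∑ q' ∈ s, covKernel N q q' ≤ 3 * N / q := by
  have hsame : ∑ q' ∈ s, (if q.minFac = q'.minFac then 2 * (N : ℝ) / (q * q') else 0)
      = 2 * N / q * ∑ q' ∈ s with q.minFac = q'.minFac, (q' : ℝ)⁻¹ := by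
    rw [sum_filter, mul_sum]
    refine sum_congr rfl fun q' _ => ?_
    split_ifs <;> ring
  have hgeom : ∑ q' ∈ s with q.minFac = q'.minFac, (q' : ℝ)⁻¹ ≤ 1 :=
    sum_inv_le_one_of_minFac_eq (Nat.minFac_prime (hs q hq).one_lt.ne') fun q' hq' =>
      ⟨hs q' (mem_filter.1 hq').1, (mem_filter.1 hq').2.symm⟩
  simp only [covKernel, sum_add_distrib, sum_ite_eq, if_pos hq, hsame]
  calc (N : ℝ) / q + 2 * N / q * ∑ q' ∈ s with q.minFac = q'.minFac, (q' : ℝ)⁻¹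
      ≤ N / q + 2 * N / q * 1 := by gcongr
    _ = 3 * N / q := by ring

lemma sum_sum_abs_mul_abs_mul_le {ι : Type*} (s : Finset ι) (a : ι → ℝ) {K : ι → ι → ℝ}
    (hK : ∀ i ∈ s, ∀ j ∈ s, 0 ≤ K i j) (hKsymm : ∀ i ∈ s, ∀ j ∈ s, K i j = K j i) :
    ∑ i ∈ s, ∑ j ∈ s, |a i| * |a j| * K i j ≤ ∑ i ∈ s, a i ^ 2 * ∑ j ∈ s, K i j := by
  have hswap : ∑ i ∈ s, ∑ j ∈ s, a j ^ 2 * K i j = ∑ i ∈ s, ∑ j ∈ s, a i ^ 2 * K i j := by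
    rw [sum_comm]
    exact sum_congr rfl fun i hi => sum_congr rfl fun j hj => by rw [hKsymm j hj i hi]
  calc ∑ i ∈ s, ∑ j ∈ s, |a i| * |a j| * K i j
      ≤ ∑ i ∈ s, ∑ j ∈ s, (a i ^ 2 * K i j + a j ^ 2 * K i j) / 2 := by
        refine sum_le_sum fun i hi => sum_le_sum fun j hj => ?_
        have := two_mul_le_add_sq |a i| |a j|
        rw [sq_abs, sq_abs] at this
        nlinarith [hK i hi j hj]
    _ = ∑ i ∈ s, a i ^ 2 * ∑ j ∈ s, K i j := by
        simp only [← sum_div, sum_add_distrib, hswap, mul_sum]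
        ring

lemma sum_sq_sum_mul_eq {α ι : Type*} (I : Finset α) (s : Finset ι) (a : ι → ℝ)
    (X : ι → α → ℝ) : ∑ n ∈ I, (∑ i ∈ s, a i * X i n) ^ 2
      = ∑ i ∈ s, ∑ j ∈ s, a i * a j * ∑ n ∈ I, X i n * X j n := by
  simp_rw [sq, sum_mul_sum]
  rw [sum_comm]
  refine sum_congr rfl fun i _ => ?_
  rw [sum_comm]
  refine sum_congr rfl fun j _ => ?_
  rw [mul_sum]
  exact sum_congr rfl fun n _ => by ring

lemma sum_ppows_of_mul_self_le (N : ℕ) : ∑ q ∈ ppows N with q * q ≤ N, (q : ℝ) ≤ N := by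
  have hle : ∀ q ∈ {q ∈ ppows (N : ℝ) | q * q ≤ N}, q ≤ N.sqrt := fun q hq =>
    Nat.le_sqrt.2 (mem_filter.1 hq).2
  have hcard : #{q ∈ ppows N | q * q ≤ N} ≤ N.sqrt := by
    refine (card_le_card fun q hq => mem_Icc.2 ⟨?_, hle q hq⟩).trans (Nat.card_Icc 1 _).le
    exact (mem_ppows_natCast.1 (mem_filter.1 hq).1).1.one_lt.le
  have : ∑ q ∈ ppows N with q * q ≤ N, q ≤ N :=
    (sum_le_card_nsmul _ _ _ hle).trans ((Nat.mul_le_mul_right _ hcard).trans (Nat.sqrt_le N))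
  rw [← Nat.cast_sum]
  exact_mod_cast this

lemma sq_sum_abs_ppows_of_mul_self_le (g : ℕ → ℝ) (N : ℕ) :
    (∑ q ∈ ppows N with q * q ≤ N, |g q|) ^ 2 ≤ N * BgR g N ^ 2 := by
  have hpos : ∀ q ∈ {q ∈ ppows (N : ℝ) | q * q ≤ N}, (0 : ℝ) < q := fun q hq => by
    have := (mem_ppows_natCast.1 (mem_filter.1 hq).1).1.pos
    positivity
  calc (∑ q ∈ ppows N with q * q ≤ N, |g q|) ^ 2
      ≤ (∑ q ∈ ppows N with q * q ≤ N, g q ^ 2 / q) * ∑ q ∈ ppows N with q * q ≤ N, (q : ℝ) :=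
        sq_sum_abs_le_sum_sq_div_mul_sum _ g hpos
    _ ≤ BgR g N ^ 2 * N :=
        mul_le_mul (sum_sq_div_le_BgR_sq g (filter_subset _ _)) (sum_ppows_of_mul_self_le N)
          (sum_nonneg fun q hq => (hpos q hq).le) (sq_nonneg _)
    _ = N * BgR g N ^ 2 := mul_comm _ _

lemma sum_sum_abs_mul_abs_mul_covKernel_le (g : ℕ → ℝ) {N : ℕ} {s : Finset ℕ}
    (hs : s ⊆ ppows N) :
    ∑ q ∈ s, ∑ q' ∈ s, |g q| * |g q'| * covKernel N q q' ≤ 3 * N * BgR g N ^ 2 := by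
  have hpp : ∀ q ∈ s, IsPrimePow q := fun q hq => (mem_ppows_natCast.1 (hs hq)).1
  calc ∑ q ∈ s, ∑ q' ∈ s, |g q| * |g q'| * covKernel N q q'
      ≤ ∑ q ∈ s, g q ^ 2 * (3 * N / q) :=
        (sum_sum_abs_mul_abs_mul_le s g (fun q _ q' _ => covKernel_nonneg N q q')
          fun q _ q' _ => covKernel_comm N q q').trans <| sum_le_sum fun q hq =>
            mul_le_mul_of_nonneg_left (sum_covKernel_le N hpp hq) (sq_nonneg _)
    _ = 3 * N * ∑ q ∈ s, g q ^ 2 / q := by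
        rw [mul_sum]
        exact sum_congr rfl fun q _ => by ring
    _ ≤ 3 * N * BgR g N ^ 2 := by
        gcongr
        exact sum_sq_div_le_BgR_sq g hs

lemma sum_sq_small_le (g : ℕ → ℝ) (N : ℕ) :
    ∑ n ∈ Icc 1 N, (∑ q ∈ ppows N with q * q ≤ N, g q * (exactInd q n - exactDensity q)) ^ 2
      ≤ 11 * N * BgR g N ^ 2 := by
  set s := {q ∈ ppows (N : ℝ) | q * q ≤ N}
  have hpp : ∀ q ∈ s, IsPrimePow q := fun q hq => (mem_ppows_natCast.1 (mem_filter.1 hq).1).1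
  rw [sum_sq_sum_mul_eq]
  calc ∑ q ∈ s, ∑ q' ∈ s, g q * g q' * exactCov N q q'
      ≤ ∑ q ∈ s, ∑ q' ∈ s, (|g q| * |g q'| * covKernel N q q' + 8 * (|g q| * |g q'|)) := by
        refine sum_le_sum fun q hq => sum_le_sum fun q' hq' => ?_
        calc g q * g q' * exactCov N q q' ≤ |g q| * |g q'| * |exactCov N q q'| := by
              rw [← abs_mul, ← abs_mul]; exact le_abs_self _
          _ ≤ |g q| * |g q'| * (covKernel N q q' + 8) := by
              gcongr; exact abs_exactCov_le N (hpp q hq) (hpp q' hq')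
          _ = _ := by ring
    _ = ∑ q ∈ s, ∑ q' ∈ s, |g q| * |g q'| * covKernel N q q' + 8 * (∑ q ∈ s, |g q|) ^ 2 := by
        simp only [sum_add_distrib, ← mul_sum, sq, sum_mul_sum]
    _ ≤ 3 * N * BgR g N ^ 2 + 8 * (N * BgR g N ^ 2) :=
        add_le_add (sum_sum_abs_mul_abs_mul_covKernel_le g (filter_subset _ _))
          (mul_le_mul_of_nonneg_left (sq_sum_abs_ppows_of_mul_self_le g N) (by norm_num))
    _ = 11 * N * BgR g N ^ 2 := by ring

lemma sum_sq_large_le (g : ℕ → ℝ) (N : ℕ) :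
    ∑ n ∈ Icc 1 N, (∑ q ∈ ppows N with ¬ q * q ≤ N, g q * exactInd q n) ^ 2
      ≤ N * BgR g N ^ 2 := by
  set s := {q ∈ ppows (N : ℝ) | ¬ q * q ≤ N}
  have hs : ∀ q ∈ s, IsPrimePow q ∧ N < q * q := fun q hq =>
    ⟨(mem_ppows_natCast.1 (mem_filter.1 hq).1).1, not_le.1 (mem_filter.1 hq).2⟩
  have hdiag : ∀ q ∈ s, ∑ q' ∈ s, g q * g q' * ∑ n ∈ Icc 1 N, exactInd q n * exactInd q' n
      = g q ^ 2 * ∑ n ∈ Icc 1 N, exactInd q n := by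
    intro q hq
    rw [sum_eq_single_of_mem q hq]
    · simp only [exactInd_mul_self]; ring
    · intro q' hq' hne
      rw [sum_eq_zero fun n hn => exactInd_mul_exactInd_eq_zero_of_lt (hs q hq).1 (hs q' hq').1
        hne.symm (hs q hq).2 (hs q' hq').2 (mem_Icc.1 hn).2, mul_zero]
  rw [sum_sq_sum_mul_eq, sum_congr rfl hdiag]
  calc ∑ q ∈ s, g q ^ 2 * ∑ n ∈ Icc 1 N, exactInd q n ≤ ∑ q ∈ s, g q ^ 2 * (N / q) :=
        sum_le_sum fun q _ => mul_le_mul_of_nonneg_left (sum_exactInd_le N q) (sq_nonneg _)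
    _ = N * ∑ q ∈ s, g q ^ 2 / q := by
        rw [mul_sum]
        exact sum_congr rfl fun q _ => by ring
    _ ≤ N * BgR g N ^ 2 := by
        gcongr
        exact sum_sq_div_le_BgR_sq g (filter_subset _ _)

/-- Turán–Kubilius, centred at the part of `A_g(N)` coming from the prime powers `q ≤ √N`. -/
theorem IsAdditiveR.sum_sq_sub_le {g : ℕ → ℝ} (hg : IsAdditiveR g) (N : ℕ) :
    ∑ n ∈ Icc 1 N, (g n - ∑ q ∈ ppows N with q * q ≤ N, g q * exactDensity q) ^ 2
      ≤ 24 * N * BgR g N ^ 2 := by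
  have hsplit : ∀ n ∈ Icc 1 N, g n - ∑ q ∈ ppows N with q * q ≤ N, g q * exactDensity q
      = (∑ q ∈ ppows N with q * q ≤ N, g q * (exactInd q n - exactDensity q))
        + ∑ q ∈ ppows N with ¬ q * q ≤ N, g q * exactInd q n := by
    intro n hn
    rw [hg.eq_sum_ppows_mul_exactInd (by have := (mem_Icc.1 hn).1; omega) (mem_Icc.1 hn).2,
      ← sum_filter_add_sum_filter_not (ppows N) (fun q => q * q ≤ N)]
    simp only [mul_sub, sum_sub_distrib]
    ring
  calc ∑ n ∈ Icc 1 N, (g n - ∑ q ∈ ppows N with q * q ≤ N, g q * exactDensity q) ^ 2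
      ≤ ∑ n ∈ Icc 1 N, 2 * ((∑ q ∈ ppows N with q * q ≤ N,
          g q * (exactInd q n - exactDensity q)) ^ 2
        + (∑ q ∈ ppows N with ¬ q * q ≤ N, g q * exactInd q n) ^ 2) :=
        sum_le_sum fun n hn => hsplit n hn ▸ add_sq_le
    _ ≤ 2 * (11 * N * BgR g N ^ 2 + N * BgR g N ^ 2) := by
        rw [← mul_sum, sum_add_distrib]
        gcongr
        exacts [sum_sq_small_le g N, sum_sq_large_le g N]
    _ = 24 * N * BgR g N ^ 2 := by ring

lemma sum_abs_le_sqrt_card_mul_sqrt_sum_sq {ι : Type*} (s : Finset ι) (f : ι → ℝ) :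
    ∑ i ∈ s, |f i| ≤ √(#s : ℝ) * √(∑ i ∈ s, f i ^ 2) := by
  rw [← Real.sqrt_mul (Nat.cast_nonneg _)]
  refine (le_abs_self _).trans (Real.abs_le_sqrt ?_)
  simpa only [sq_abs] using sq_sum_le_card_mul_sum_sq (s := s) (f := fun i => |f i|)

lemma sum_abs_eq_sum_add_two_mul_sum_neg {ι : Type*} (s : Finset ι) (f : ι → ℝ) :
    ∑ i ∈ s, |f i| = ∑ i ∈ s, f i + 2 * ∑ i ∈ s with f i < 0, -f i := by
  rw [sum_filter, mul_sum, ← sum_add_distrib]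
  refine sum_congr rfl fun i _ => ?_
  split_ifs with h
  · rw [abs_of_neg h]; ring
  · rw [abs_of_nonneg (not_lt.1 h)]; ring

lemma sum_Icc_sub_pred (f : ℕ → ℝ) (N : ℕ) :
    ∑ n ∈ Icc 1 N, (f n - f (n - 1)) = f N - f 0 := by
  induction N with
  | zero => simp
  | succ N ih => rw [sum_Icc_succ_top (by omega), ih]; simp

lemma sum_pred_le_sum_Icc {t : Finset ℕ} {N : ℕ} (ht : t ⊆ Icc 2 N) {h : ℕ → ℝ}
    (hh : ∀ n, 0 ≤ h n) : ∑ n ∈ t, h (n - 1) ≤ ∑ n ∈ Icc 1 N, h n := by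
  have hinj : Set.InjOn (· - 1) t := fun n hn n' hn' (e : n - 1 = n' - 1) => by
    have := mem_Icc.1 (ht hn); have := mem_Icc.1 (ht hn'); omega
  rw [← sum_image (f := h) hinj]
  refine sum_le_sum_of_subset_of_nonneg (fun m hm => ?_) fun _ _ _ => hh _
  obtain ⟨n, hn, rfl⟩ := mem_image.1 hm
  have := mem_Icc.1 (ht hn)
  exact mem_Icc.2 ⟨by omega, by omega⟩

lemma sum_abs_sub_pred_le (f : ℕ → ℝ) (h01 : f 0 ≤ f 1) (c : ℝ) (N : ℕ) :
    ∑ n ∈ Icc 1 N, |f n - f (n - 1)| ≤ f N - f 0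
      + 4 * √(#{n ∈ Icc 1 N | f n < f (n - 1)} : ℝ) * √(∑ n ∈ Icc 1 N, (f n - c) ^ 2) := by
  set t := {n ∈ Icc 1 N | f n < f (n - 1)}
  set T := ∑ n ∈ Icc 1 N, (f n - c) ^ 2
  have ht : t ⊆ Icc 2 N := fun n hn => by
    obtain ⟨hn, hlt⟩ := mem_filter.1 hn
    obtain ⟨h1, hN⟩ := mem_Icc.1 hn
    refine mem_Icc.2 ⟨?_, hN⟩
    rcases (show n = 1 ∨ 2 ≤ n by omega) with rfl | h2
    · exact absurd hlt (not_lt.2 h01)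
    · exact h2
  have hcur : √(∑ n ∈ t, (f n - c) ^ 2) ≤ √T :=
    Real.sqrt_le_sqrt (sum_le_sum_of_subset_of_nonneg (filter_subset _ _) fun _ _ _ => sq_nonneg _)
  have hprev : √(∑ n ∈ t, (f (n - 1) - c) ^ 2) ≤ √T :=
    Real.sqrt_le_sqrt (sum_pred_le_sum_Icc ht (h := fun n => (f n - c) ^ 2) fun _ => sq_nonneg _)
  have hneg : ∑ n ∈ Icc 1 N with f n - f (n - 1) < 0, -(f n - f (n - 1))
      = ∑ n ∈ t, ((f (n - 1) - c) - (f n - c)) := by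
    simp only [sub_neg, neg_sub, t]
    exact sum_congr rfl fun _ _ => by ring
  rw [sum_abs_eq_sum_add_two_mul_sum_neg, sum_Icc_sub_pred, hneg]
  calc f N - f 0 + 2 * ∑ n ∈ t, ((f (n - 1) - c) - (f n - c))
      ≤ f N - f 0 + 2 * (∑ n ∈ t, |f (n - 1) - c| + ∑ n ∈ t, |f n - c|) := by
        rw [← sum_add_distrib]
        gcongr with n
        linarith [le_abs_self (f (n - 1) - c), neg_abs_le (f n - c)]
    _ ≤ f N - f 0 + 2 * (√(#t : ℝ) * √T + √(#t : ℝ) * √T) := by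
        gcongr
        · exact (sum_abs_le_sqrt_card_mul_sqrt_sum_sq t _).trans (by gcongr)
        · exact (sum_abs_le_sqrt_card_mul_sqrt_sum_sq t _).trans (by gcongr)
    _ = f N - f 0 + 4 * √(#t : ℝ) * √T := by ring

lemma IsAdditiveR.sum_abs_sub_pred_le_BgR {g : ℕ → ℝ} (hg : IsAdditiveR g) (hg0 : g 0 = 0)
    {N : ℕ} (hN : N ≠ 0) : ∑ n ∈ Icc 1 N, |g n - g (n - 1)|
      ≤ BgR g N * √N * (1 + 20 * √(#{n ∈ Icc 1 N | g n < g (n - 1)} : ℝ)) := by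
  set c := ∑ q ∈ ppows N with q * q ≤ N, g q * exactDensity q
  have hB := BgR_nonneg g N
  have hT : √(∑ n ∈ Icc 1 N, (g n - c) ^ 2) ≤ 5 * BgR g N * √N := by
    refine (Real.sqrt_le_sqrt ((hg.sum_sq_sub_le N).trans ?_)).trans
      (Real.sqrt_sq (by positivity)).le
    rw [mul_pow, mul_pow, Real.sq_sqrt N.cast_nonneg]
    nlinarith [sq_nonneg (BgR g N), N.cast_nonneg (α := ℝ)]
  have hsum := sum_abs_sub_pred_le g (by rw [hg0, hg.map_one]) c N
  rw [hg0, sub_zero] at hsum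
  have hgN := (le_abs_self _).trans (hg.abs_le_BgR_mul_sqrt hN)
  nlinarith [mul_le_mul_of_nonneg_left hT (Real.sqrt_nonneg (#{n ∈ Icc 1 N | g n < g (n - 1)} : ℝ))]

/-- If `𝓑(X) = {n ≤ X : g(n) < g(n-1)}`, then
`(1/X) ∑_{n ≤ X} |g(n) - g(n-1)| ≪ ((|𝓑(X)|/X)^{1/2} + (log X)/√X) B_g(X)`. -/
theorem stmt7 :
    ∃ C : ℝ, 0 < C ∧ ∀ (g : ℕ → ℝ), IsAdditiveR g → g 0 = 0 → ∀ X : ℝ, 3 ≤ X →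
      (1 / X) * ∑ n ∈ Finset.Icc 1 ⌊X⌋₊, |g n - g (n - 1)|
        ≤ C * (Real.sqrt ((((Finset.Icc 1 ⌊X⌋₊).filter
              (fun n => g n < g (n - 1))).card : ℝ) / X)
            + Real.log X / Real.sqrt X) * BgR g X := by
  refine ⟨20, by norm_num, fun g hg hg0 X hX => ?_⟩
  have hX0 : 0 < X := by linarith
  have hsX : 0 < √X := Real.sqrt_pos.2 hX0
  have hlog : 1 ≤ Real.log X := by
    rw [Real.le_log_iff_exp_le hX0]
    linarith [Real.exp_one_lt_d9]
  have hsum := hg.sum_abs_sub_pred_le_BgR hg0 (Nat.floor_pos.2 (by linarith : 1 ≤ X)).ne'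
  rw [BgR, ppows_natFloor, ← BgR] at hsum
  set K : ℝ := (((Finset.Icc 1 ⌊X⌋₊).filter (fun n => g n < g (n - 1))).card : ℝ)
  have hK := Real.sqrt_nonneg K
  have hB := BgR_nonneg g X
  calc 1 / X * ∑ n ∈ Icc 1 ⌊X⌋₊, |g n - g (n - 1)| ≤ 1 / X * (BgR g X * √X * (1 + 20 * √K)) := by
        gcongr
        exact hsum.trans (by gcongr; exact Nat.floor_le hX0.le)
    _ = (BgR g X + 20 * √K * BgR g X) / √X := by
        field_simp
        rw [Real.sq_sqrt hX0.le]; ring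
    _ ≤ 20 * (√K + Real.log X) * BgR g X / √X := by gcongr; nlinarith
    _ = 20 * (√(K / X) + Real.log X / √X) * BgR g X := by
        rw [Real.sqrt_div' K hX0.le]
        field_simp
end

section
/- Let g: ℕ → ℝ be additive and λ₀ = λ₀(X) ∈ ℝ with |λ₀(X)| ≪ B_g(X)/log X. If B_{g_{λ₀}}(X) = o(B_g(X)) as X → ∞, where g_{λ₀}(n) := g(n) − λ₀(X) log n, then |λ₀(X)| ≥ (1/2)·B_g(X)/log X for all sufficiently large X. -/
open Finset

/-! Writing `g = λ₀ log + g_{λ₀}`, the triangle inequality for the seminorm `f ↦ B_f(X)` gives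
`B_g ≤ |λ₀| B_log + B_{g_{λ₀}} ≤ |λ₀| B_log + B_g / 10` for large `X`, so it suffices that
`B_log(X) ≤ (9/5) log X` eventually. On primes, dyadic blocks `[2^n, 2^{n+1})` and Chebyshev's
bound `θ(x) ≤ x log 4` give `∑_{p ≤ X} (log p)²/p ≤ 2 (log X + 2)²`; on higher powers,
`(log p^k)² ≤ (log X)²` and `∑_{p ≥ 2} ∑_{k ≥ 2} p^{-k} ≤ 1` bound the rest by `(log X)²`. -/

open Real Chebyshev

noncomputable def ppowsWeighting (X : ℝ) : (ℕ → ℝ) →ₗ[ℝ] EuclideanSpace ℝ (ppows X) where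
  toFun f := WithLp.toLp 2 fun q => f q / √(q : ℝ)
  map_add' f₁ f₂ := by ext; simp [add_div]
  map_smul' c f := by ext; simp [mul_div_assoc]

lemma BgR_eq_norm_ppowsWeighting (f : ℕ → ℝ) (X : ℝ) : BgR f X = ‖ppowsWeighting X f‖ := by
  rw [EuclideanSpace.norm_eq, BgR, ← Finset.sum_coe_sort (ppows X)]
  simp [ppowsWeighting, div_pow, sq_abs]

lemma BgR_le_abs_mul_BgR_log_add (g : ℕ → ℝ) (c X : ℝ) :
    BgR g X ≤ |c| * BgR (fun n => log n) X + BgR (fun n => g n - c * log n) X := by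
  have hg : g = c • (fun n : ℕ => log n) + fun n => g n - c * log n := by
    ext n; simp
  simp only [BgR_eq_norm_ppowsWeighting]
  calc ‖ppowsWeighting X g‖
      = ‖c • ppowsWeighting X (fun n => log n) + ppowsWeighting X (fun n => g n - c * log n)‖ := by
        rw [← map_smul, ← map_add, ← hg]
    _ ≤ _ := by rw [← Real.norm_eq_abs, ← norm_smul]; exact norm_add_le _ _

lemma sum_primes_Ico_two_pow_log_sq_div_le (n : ℕ) :
    ∑ p ∈ Ico (2 ^ n : ℕ) (2 ^ (n + 1)) with p.Prime, log p ^ 2 / p ≤ 4 * log 2 ^ 2 * (n + 1) := by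
  set a : ℝ := (n + 1) * log 2 / 2 ^ n
  have hθ : ∑ p ∈ Ico (2 ^ n : ℕ) (2 ^ (n + 1)) with p.Prime, log p
      ≤ θ ((2 ^ (n + 1) : ℕ) : ℝ) := by
    rw [theta_eq_sum_primesLE_log, Nat.primesLE_eq_filter_range]
    refine sum_le_sum_of_subset_of_nonneg ?_ fun p hp _ => log_nonneg ?_
    · intro p
      simp only [mem_filter, mem_Ico, mem_range]
      exact fun ⟨⟨_, h⟩, hp⟩ => ⟨by omega, hp⟩
    · exact_mod_cast (mem_filter.1 hp).2.one_le
  calc ∑ p ∈ Ico (2 ^ n : ℕ) (2 ^ (n + 1)) with p.Prime, log p ^ 2 / p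
      ≤ ∑ p ∈ Ico (2 ^ n : ℕ) (2 ^ (n + 1)) with p.Prime, a * log p := by
        refine sum_le_sum fun p hp => ?_
        obtain ⟨⟨hlo, hhi⟩, hp⟩ := by simpa only [mem_filter, mem_Ico] using hp
        have hlo' : (2 : ℝ) ^ n ≤ p := by exact_mod_cast hlo
        have hlog : log p ≤ (n + 1) * log 2 := calc
          log p ≤ log ((2 : ℝ) ^ (n + 1)) :=
            log_le_log (by exact_mod_cast hp.pos) (by exact_mod_cast hhi.le)
          _ = (n + 1) * log 2 := by rw [Real.log_pow]; push_cast; ring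
        have hlog0 : 0 ≤ log p := log_nonneg (by exact_mod_cast hp.one_le)
        calc log p ^ 2 / p = log p * (log p / p) := by ring
          _ ≤ ((n + 1) * log 2) * (log p / 2 ^ n) := by gcongr
          _ = a * log p := by ring
    _ ≤ a * (log 4 * 2 ^ (n + 1)) := by
        rw [← mul_sum]
        gcongr
        exact hθ.trans (by simpa using theta_le_log4_mul_x (by positivity))
    _ = 4 * log 2 ^ 2 * (n + 1) := by
        rw [show (4 : ℝ) = 2 ^ 2 by norm_num, Real.log_pow]
        simp only [a]
        field_simp
        ring

lemma sum_primesBelow_two_pow_log_sq_div_le (n : ℕ) :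
    ∑ p ∈ Nat.primesBelow (2 ^ n), log p ^ 2 / p ≤ 2 * log 2 ^ 2 * n * (n + 1) := by
  induction n with
  | zero => simp [Nat.primesBelow, filter_singleton, Nat.not_prime_zero]
  | succ n ih =>
    have hsplit : ∑ p ∈ Nat.primesBelow (2 ^ (n + 1)), log p ^ 2 / p
        = ∑ p ∈ Nat.primesBelow (2 ^ n), log p ^ 2 / p
          + ∑ p ∈ Ico (2 ^ n : ℕ) (2 ^ (n + 1)) with p.Prime, log p ^ 2 / p := by
      simp only [Nat.primesBelow, sum_filter]
      exact (sum_range_add_sum_Ico _ (Nat.pow_le_pow_right two_pos n.le_succ)).symm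
    rw [hsplit]
    have := sum_primes_Ico_two_pow_log_sq_div_le n
    push_cast
    nlinarith

lemma sum_primes_le_log_sq_div_le (X : ℝ) (hX : 1 ≤ X) :
    ∑ p ∈ Ioc 0 ⌊X⌋₊ with p.Prime, log p ^ 2 / p ≤ 2 * (log X + 2) ^ 2 := by
  set m := Nat.log 2 ⌊X⌋₊
  have hm : m * log 2 ≤ log X := by
    rw [← Real.log_pow]
    refine log_le_log (by positivity) ?_
    calc (2 : ℝ) ^ m = ((2 ^ m : ℕ) : ℝ) := by push_cast; rfl
      _ ≤ ⌊X⌋₊ := Nat.cast_le.2 (Nat.pow_log_le_self 2 (Nat.floor_pos.2 hX).ne')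
      _ ≤ X := Nat.floor_le (by linarith)
  have hsub : (Ioc 0 ⌊X⌋₊).filter Nat.Prime ⊆ Nat.primesBelow (2 ^ (m + 1)) := by
    intro p hp
    obtain ⟨⟨-, hpX⟩, hp⟩ := by simpa only [mem_filter, mem_Ioc] using hp
    exact Nat.mem_primesBelow.2 ⟨hpX.trans_lt (Nat.lt_pow_succ_log_self one_lt_two _), hp⟩
  have hlog2 : log 2 < 1 := log_two_lt_d9.trans (by norm_num)
  have hlog2' : 0 < log 2 := log_pos one_lt_two
  calc ∑ p ∈ Ioc 0 ⌊X⌋₊ with p.Prime, log p ^ 2 / p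
      ≤ ∑ p ∈ Nat.primesBelow (2 ^ (m + 1)), log p ^ 2 / p :=
        sum_le_sum_of_subset_of_nonneg hsub fun _ _ _ => by positivity
    _ ≤ 2 * log 2 ^ 2 * (m + 1 : ℕ) * ((m + 1 : ℕ) + 1) :=
        sum_primesBelow_two_pow_log_sq_div_le (m + 1)
    _ = 2 * (m * log 2 + log 2) * (m * log 2 + 2 * log 2) := by push_cast; ring
    _ ≤ 2 * (log X + 2) ^ 2 := by
        have : (0 : ℝ) ≤ m * log 2 := by positivity
        nlinarith

lemma sum_Ioc_one_inv_pow_le (p N : ℕ) (hp : 2 ≤ p) :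
    ∑ k ∈ Ioc 1 N, ((p : ℝ)⁻¹) ^ k ≤ 1 / (p - 1) - 1 / p := by
  have hp' : (2 : ℝ) ≤ p := by exact_mod_cast hp
  rw [← Finset.Ico_add_one_add_one_eq_Ioc]
  refine (geom_sum_Ico_le_of_lt_one (by positivity) (inv_lt_one_of_one_lt₀ (by linarith))).trans
    (le_of_eq ?_)
  have : (p : ℝ) - 1 ≠ 0 := by linarith
  rw [inv_pow]
  field_simp
  ring

lemma sum_Icc_sum_Ioc_inv_pow_le_one (M N : ℕ) :
    ∑ p ∈ Icc 2 M, ∑ k ∈ Ioc 1 N, ((p : ℝ)⁻¹) ^ k ≤ 1 := by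
  calc ∑ p ∈ Icc 2 M, ∑ k ∈ Ioc 1 N, ((p : ℝ)⁻¹) ^ k
      ≤ ∑ p ∈ Icc 2 M, (1 / ((p : ℝ) - 1) - 1 / p) :=
        sum_le_sum fun p hp => sum_Ioc_one_inv_pow_le p N (mem_Icc.1 hp).1
    _ = 1 - 1 / ((M + 1 - 2 : ℕ) + 1 : ℝ) := by
        rw [← Finset.Ico_add_one_right_eq_Icc, sum_Ico_eq_sum_range]
        convert sum_range_sub' (fun i : ℕ => 1 / ((i : ℝ) + 1)) (M + 1 - 2) using 1
        · refine sum_congr rfl fun i _ => ?_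
          push_cast
          ring_nf
        · simp
    _ ≤ 1 := sub_le_self _ (by positivity)

lemma natCast_pow_le_of_le_floor_rpow {X : ℝ} (hX : 0 ≤ X) {p k : ℕ} (hk : k ≠ 0)
    (hp : p ≤ ⌊X ^ ((1 : ℝ) / k)⌋₊) : ((p ^ k : ℕ) : ℝ) ≤ X := by
  have hp' : (p : ℝ) ≤ X ^ ((k : ℝ)⁻¹) := by
    rw [← one_div]; exact (Nat.le_floor_iff (by positivity)).1 hp
  calc ((p ^ k : ℕ) : ℝ) = (p : ℝ) ^ k := by push_cast; rfl
    _ ≤ (X ^ ((k : ℝ)⁻¹)) ^ k := by gcongr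
    _ = X := rpow_inv_natCast_pow hX hk

lemma sum_higher_prime_powers_log_sq_div_le (X : ℝ) (hX : 1 ≤ X) (N : ℕ) :
    ∑ k ∈ Ioc 1 N, ∑ p ∈ Ioc 0 ⌊X ^ ((1 : ℝ) / k)⌋₊ with p.Prime,
      log ((p ^ k : ℕ) : ℝ) ^ 2 / ((p ^ k : ℕ) : ℝ) ≤ log X ^ 2 := by
  calc ∑ k ∈ Ioc 1 N, ∑ p ∈ Ioc 0 ⌊X ^ ((1 : ℝ) / k)⌋₊ with p.Prime,
        log ((p ^ k : ℕ) : ℝ) ^ 2 / ((p ^ k : ℕ) : ℝ)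
      ≤ ∑ k ∈ Ioc 1 N, ∑ p ∈ Icc 2 ⌊X⌋₊, log X ^ 2 * ((p : ℝ)⁻¹) ^ k := by
        refine sum_le_sum fun k hk => ?_
        have hk0 : k ≠ 0 := by have := (mem_Ioc.1 hk).1; omega
        refine (sum_le_sum fun p hp => ?_).trans
          (sum_le_sum_of_subset_of_nonneg ?_ fun _ _ _ => by positivity)
        · obtain ⟨⟨-, hpX⟩, hp⟩ := by simpa only [mem_filter, mem_Ioc] using hp
          have hpk := natCast_pow_le_of_le_floor_rpow (by linarith) hk0 hpX
          rw [inv_pow, ← Nat.cast_pow, div_eq_mul_inv]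
          gcongr
          exact_mod_cast pow_pos hp.pos k
        · intro p hp
          obtain ⟨⟨-, hpX⟩, hp⟩ := by simpa only [mem_filter, mem_Ioc] using hp
          refine mem_Icc.2 ⟨hp.two_le, Nat.le_floor ?_⟩
          exact (Nat.cast_le.2 (Nat.le_self_pow hk0 p)).trans
            (natCast_pow_le_of_le_floor_rpow (by linarith) hk0 hpX)
    _ = log X ^ 2 * ∑ p ∈ Icc 2 ⌊X⌋₊, ∑ k ∈ Ioc 1 N, ((p : ℝ)⁻¹) ^ k := by
        simp only [mul_sum]
        exact sum_comm
    _ ≤ log X ^ 2 := mul_le_of_le_one_right (sq_nonneg _) (sum_Icc_sum_Ioc_inv_pow_le_one _ _)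

lemma ppows_eq_filter_Ioc (X : ℝ) : ppows X = (Ioc 0 ⌊X⌋₊).filter IsPrimePow := by
  ext q
  simp only [ppows, mem_filter, mem_Icc, mem_Ioc]
  exact ⟨fun ⟨⟨_, h⟩, hq⟩ => ⟨⟨by omega, h⟩, hq⟩, fun ⟨⟨_, h⟩, hq⟩ => ⟨⟨hq.two_le, h⟩, hq⟩⟩

lemma sum_ppows_log_sq_div_le (X : ℝ) (hX : 1 ≤ X) :
    ∑ q ∈ ppows X, log q ^ 2 / q ≤ 2 * (log X + 2) ^ 2 + log X ^ 2 := by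
  rw [ppows_eq_filter_Ioc, sum_PrimePow_eq_sum_sum' (fun q : ℕ => log (q : ℝ) ^ 2 / q)
    (by linarith) (Nat.le_succ _), ← add_sum_Ioc_eq_sum_Icc (by omega)]
  gcongr
  · simpa using sum_primes_le_log_sq_div_le X hX
  · exact sum_higher_prime_powers_log_sq_div_le X hX _

lemma BgR_log_le (X : ℝ) (hX : exp 40 ≤ X) : BgR (fun n => log n) X ≤ 9 / 5 * log X := by
  have hL : 40 ≤ log X := (le_log_iff_exp_le ((exp_pos 40).trans_le hX)).2 hX
  rw [BgR, sqrt_le_left (by linarith)]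
  refine (sum_ppows_log_sq_div_le X (one_le_exp (by norm_num) |>.trans hX)).trans ?_
  nlinarith

theorem stmt14_general (g : ℕ → ℝ) (lam0 : ℝ → ℝ)
    (hsmall : ∀ ε : ℝ, 0 < ε → ∃ X₀ : ℝ, ∀ X : ℝ, X₀ ≤ X →
      BgR (fun n => g n - lam0 X * Real.log n) X ≤ ε * BgR g X) :
    ∃ X₀ : ℝ, ∀ X : ℝ, X₀ ≤ X →
      (1 / 2) * BgR g X / Real.log X ≤ |lam0 X| := by
  obtain ⟨X₁, hX₁⟩ := hsmall (1 / 10) (by norm_num)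
  refine ⟨max X₁ (exp 40), fun X hX => ?_⟩
  have hXe : exp 40 ≤ X := le_of_max_le_right hX
  have hL : 0 < log X := log_pos ((one_lt_exp_iff.2 (by norm_num)).trans_le hXe)
  have hlog := mul_le_mul_of_nonneg_left (BgR_log_le X hXe) (abs_nonneg (lam0 X))
  have htri := BgR_le_abs_mul_BgR_log_add g (lam0 X) X
  have hsmall := hX₁ X (le_of_max_le_left hX)
  rw [div_le_iff₀ hL]
  linarith

/-- If `|λ₀(X)| ≪ B_g(X)/log X` and `B_{g - λ₀(X) log}(X) = o(B_g(X))`, then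
`|λ₀(X)| ≥ (1/2) B_g(X)/log X` for all large `X`. -/
theorem stmt14 (g : ℕ → ℝ) (hg : IsAdditiveR g) (lam0 : ℝ → ℝ)
    (hbd : ∃ C : ℝ, 0 < C ∧ ∀ X : ℝ, 3 ≤ X → |lam0 X| ≤ C * BgR g X / Real.log X)
    (hsmall : ∀ ε : ℝ, 0 < ε → ∃ X₀ : ℝ, ∀ X : ℝ, X₀ ≤ X →
      BgR (fun n => g n - lam0 X * Real.log n) X ≤ ε * BgR g X) :
    ∃ X₀ : ℝ, ∀ X : ℝ, X₀ ≤ X →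
      (1 / 2) * BgR g X / Real.log X ≤ |lam0 X| :=
  stmt14_general g lam0 hsmall
end

section
/- Let g: ℕ → ℝ be additive with ∑_{X^{1/4} < p^k ≤ X} |A_g(X) − A_g(X/p^k) − λ(X) log p^k| / p^k = o(B_g(X)) for some λ(X) ≥ 0, where A_g and B_g are the usual mean and variance approximations. Then λ(X) ≪ B_g(X)/log X. -/
/-!
For a prime power `q ∈ (X^{1/4}, X^{1/2}]`, `λ Λ(q) ≤ λ log q ≤ |A(X) - A(X/q) - λ log q| +
|A(X) - A(X/q)|`, and by Cauchy–Schwarz `|A(X) - A(X/q)| ≤ B(X) (∑_{X^{1/2} < r ≤ X} 1/r)^{1/2}`.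
Dividing by `q` and summing over `q`, the left side is `λ ∑ Λ(q)/q ≥ λ (log X / 4 - O(1))` by
Mertens' estimate `∑_{n ≤ x} Λ(n)/n = log x + O(1)`, while the right side is
`o(B(X)) + O(B(X))`: a window sum `∑_{Y < r ≤ Y²} 1/r` over prime powers is bounded, because
`1/r ≤ Λ(r)/(r log Y)` for primes `r > Y` and `Λ(n)/n` is summable over proper prime powers.
-/

open Finset

open ArithmeticFunction

theorem sum_Ioc_sum_divisors_eq {M : Type*} [AddCommMonoid M] (f : ℕ → M) (n : ℕ) :
    ∑ m ∈ Ioc 0 n, ∑ d ∈ m.divisors, f d = ∑ d ∈ Ioc 0 n, (n / d) • f d := by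
  have hdiv : ∀ m ∈ Ioc 0 n, m.divisors = {d ∈ Ioc 0 n | d ∣ m} := by
    intro m hm
    ext d
    simp only [Nat.mem_divisors, mem_filter, mem_Ioc] at hm ⊢
    constructor
    · rintro ⟨hdm, -⟩
      exact ⟨⟨Nat.pos_of_dvd_of_pos hdm hm.1, (Nat.le_of_dvd hm.1 hdm).trans hm.2⟩, hdm⟩
    · rintro ⟨-, hdm⟩
      exact ⟨hdm, hm.1.ne'⟩
  rw [sum_congr rfl fun m hm => by rw [hdiv m hm], sum_comm' (t' := Ioc 0 n)
    (s' := fun d => {m ∈ Ioc 0 n | d ∣ m})]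
  · simp only [sum_const, Nat.Ioc_filter_dvd_card_eq_div]
  · intro m d
    simp only [mem_filter]
    tauto

theorem log_factorial_eq_sum_vonMangoldt (n : ℕ) :
    Real.log n.factorial = ∑ d ∈ Ioc 0 n, (n / d : ℕ) * Λ d := by
  have hfac : ∏ m ∈ Ioc 0 n, m = n.factorial := Finset.prod_Ico_id_eq_factorial n
  rw [← hfac, Nat.cast_prod, Real.log_prod fun m hm => Nat.cast_ne_zero.2 (mem_Ioc.1 hm).1.ne']
  simp_rw [← vonMangoldt_sum, sum_Ioc_sum_divisors_eq, nsmul_eq_mul]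

theorem log_sub_one_le_sum_vonMangoldt_div {n : ℕ} (hn : n ≠ 0) :
    Real.log n - 1 ≤ ∑ d ∈ Ioc 0 n, Λ d / d := by
  have hn0 : (0 : ℝ) < n := by exact_mod_cast Nat.pos_of_ne_zero hn
  have hstirling := Stirling.le_log_factorial_stirling hn
  have hlog2pi : 0 ≤ Real.log (2 * Real.pi) := Real.log_nonneg (by linarith [Real.pi_gt_three])
  have hlogn : 0 ≤ Real.log n := Real.log_nonneg (by exact_mod_cast Nat.one_le_iff_ne_zero.2 hn)
  have hupper : Real.log n.factorial ≤ n * ∑ d ∈ Ioc 0 n, Λ d / d := by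
    rw [log_factorial_eq_sum_vonMangoldt, mul_sum]
    refine sum_le_sum fun d _ => ?_
    calc ((n / d : ℕ) : ℝ) * Λ d ≤ (n / d : ℝ) * Λ d := by
          gcongr
          exact Nat.cast_div_le
      _ = n * (Λ d / d) := by ring
  have : n * (Real.log n - 1) ≤ n * ∑ d ∈ Ioc 0 n, Λ d / d := by nlinarith
  exact le_of_mul_le_mul_left this hn0

theorem sum_vonMangoldt_div_le_log_add (n : ℕ) :
    ∑ d ∈ Ioc 0 n, Λ d / d ≤ Real.log n + (Real.log 4 + 4) := by
  rcases Nat.eq_zero_or_pos n with rfl | hn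
  · simp only [Ioc_self, sum_empty, CharP.cast_eq_zero, Real.log_zero, zero_add]
    positivity
  have hn0 : (0 : ℝ) < n := by exact_mod_cast hn
  have hpsi : ∑ d ∈ Ioc 0 n, Λ d ≤ (Real.log 4 + 4) * n := by
    simpa [Chebyshev.psi] using Chebyshev.psi_le_const_mul_self hn0.le
  have hfac : Real.log n.factorial ≤ n * Real.log n := by
    rw [← Real.log_pow]
    exact Real.log_le_log (by positivity) (by exact_mod_cast Nat.factorial_le_pow n)
  have hlower : n * ∑ d ∈ Ioc 0 n, Λ d / d - ∑ d ∈ Ioc 0 n, Λ d ≤ Real.log n.factorial := by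
    rw [log_factorial_eq_sum_vonMangoldt, mul_sum, ← sum_sub_distrib]
    refine sum_le_sum fun d hd => ?_
    have hd0 : (0 : ℝ) < d := by exact_mod_cast (mem_Ioc.1 hd).1
    have : (n : ℝ) / d - 1 ≤ (n / d : ℕ) := by
      rw [div_sub_one hd0.ne', div_le_iff₀ hd0]
      have : (n : ℝ) < (n / d : ℕ) * d + d := by
        exact_mod_cast Nat.lt_div_mul_add (a := n) (mem_Ioc.1 hd).1
      linarith
    calc n * (Λ d / d) - Λ d = (n / d - 1) * Λ d := by field_simp
      _ ≤ (n / d : ℕ) * Λ d := by gcongr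
  have : n * ∑ d ∈ Ioc 0 n, Λ d / d ≤ n * (Real.log n + (Real.log 4 + 4)) := by nlinarith
  exact le_of_mul_le_mul_left this hn0

theorem abs_sum_vonMangoldt_div_sub_log_le {x : ℝ} (hx : 1 ≤ x) :
    |∑ n ∈ Ioc 0 ⌊x⌋₊, Λ n / n - Real.log x| ≤ 7 := by
  have hn : ⌊x⌋₊ ≠ 0 := (Nat.floor_pos.2 hx).ne'
  have hn0 : (0 : ℝ) < ⌊x⌋₊ := by exact_mod_cast Nat.pos_of_ne_zero hn
  have hfloor : (⌊x⌋₊ : ℝ) ≤ x := Nat.floor_le (by linarith)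
  have hlog_le : Real.log ⌊x⌋₊ ≤ Real.log x := Real.log_le_log hn0 hfloor
  have hle_log : Real.log x ≤ Real.log ⌊x⌋₊ + 1 := by
    have hx2 : x ≤ 2 * ⌊x⌋₊ := by
      have := Nat.lt_floor_add_one x
      have : (1 : ℝ) ≤ ⌊x⌋₊ := by exact_mod_cast Nat.one_le_iff_ne_zero.2 hn
      linarith
    calc Real.log x ≤ Real.log (2 * ⌊x⌋₊) := Real.log_le_log (by linarith) hx2
      _ = Real.log 2 + Real.log ⌊x⌋₊ := Real.log_mul two_ne_zero hn0.ne'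
      _ ≤ Real.log ⌊x⌋₊ + 1 := by linarith [Real.log_two_lt_d9]
  have hlog4 : Real.log 4 ≤ 3 := by linarith [Real.log_le_sub_one_of_pos (by norm_num : (0:ℝ) < 4)]
  have := log_sub_one_le_sum_vonMangoldt_div hn
  have := sum_vonMangoldt_div_le_log_add ⌊x⌋₊
  rw [abs_le]
  constructor <;> linarith

theorem sum_ppows_eq_sum_Ioc {M : Type*} [AddCommMonoid M] {f : ℕ → M}
    (hf : ∀ n, ¬ IsPrimePow n → f n = 0) (x : ℝ) :
    ∑ q ∈ ppows x, f q = ∑ n ∈ Ioc 0 ⌊x⌋₊, f n := by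
  refine sum_subset (fun q hq => ?_) fun n hn hnq => hf n fun hpp => hnq ?_
  · simp only [ppows, mem_filter, mem_Icc, mem_Ioc] at hq ⊢
    omega
  · simp only [ppows, mem_filter, mem_Icc, mem_Ioc] at hn ⊢
    exact ⟨⟨hpp.two_le, hn.2⟩, hpp⟩

theorem mem_ppows {Y : ℝ} {q : ℕ} : q ∈ ppows Y ↔ IsPrimePow q ∧ (q : ℝ) ≤ Y := by
  simp only [ppows, mem_filter, mem_Icc]
  constructor
  · rintro ⟨⟨-, hqY⟩, hq⟩
    exact ⟨hq, (Nat.le_floor_iff' hq.ne_zero).1 hqY⟩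
  · rintro ⟨hq, hqY⟩
    exact ⟨⟨hq.two_le, (Nat.le_floor_iff' hq.ne_zero).2 hqY⟩, hq⟩

noncomputable def ppowsIoc (Y Z : ℝ) : Finset ℕ :=
  (ppows Z).filter (fun q : ℕ => Y < (q : ℝ))

theorem mem_ppowsIoc {Y Z : ℝ} {q : ℕ} :
    q ∈ ppowsIoc Y Z ↔ IsPrimePow q ∧ Y < q ∧ (q : ℝ) ≤ Z := by
  rw [ppowsIoc, mem_filter, mem_ppows]
  tauto

theorem ppowsIoc_subset_ppowsIoc {Y Y' Z Z' : ℝ} (hY : Y' ≤ Y) (hZ : Z ≤ Z') :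
    ppowsIoc Y Z ⊆ ppowsIoc Y' Z' := fun q hq => by
  rw [mem_ppowsIoc] at hq ⊢
  exact ⟨hq.1, hY.trans_lt hq.2.1, hq.2.2.trans hZ⟩

theorem sum_ppowsIoc_eq_sub {M : Type*} [AddCommGroup M] (f : ℕ → M) {Y Z : ℝ} (h : Y ≤ Z) :
    ∑ q ∈ ppowsIoc Y Z, f q = ∑ q ∈ ppows Z, f q - ∑ q ∈ ppows Y, f q := by
  have hY : (ppows Z).filter (fun q : ℕ => ¬ Y < (q : ℝ)) = ppows Y := by
    ext q
    simp only [mem_filter, mem_ppows, not_lt]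
    exact ⟨fun ⟨⟨hq, _⟩, hqY⟩ => ⟨hq, hqY⟩, fun ⟨hq, hqY⟩ => ⟨⟨hq, hqY.trans h⟩, hqY⟩⟩
  rw [eq_sub_iff_add_eq, ← hY, ppowsIoc, sum_filter_add_sum_filter_not]

theorem le_sum_ppowsIoc_vonMangoldt_div {Y : ℝ} (hY : 1 ≤ Y) :
    Real.log Y - 14 ≤ ∑ q ∈ ppowsIoc Y (Y ^ 2), Λ q / q := by
  have hΛ : ∀ n, ¬ IsPrimePow n → Λ n / n = 0 := fun n hn => by
    rw [vonMangoldt_eq_zero_iff.2 hn, zero_div]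
  have hY2 : 1 ≤ Y ^ 2 := one_le_pow₀ hY
  have hupper := abs_le.1 (abs_sum_vonMangoldt_div_sub_log_le hY)
  have hlower := abs_le.1 (abs_sum_vonMangoldt_div_sub_log_le hY2)
  rw [Real.log_pow] at hlower
  rw [sum_ppowsIoc_eq_sub _ (by nlinarith), sum_ppows_eq_sum_Ioc hΛ, sum_ppows_eq_sum_Ioc hΛ]
  push_cast at hlower
  linarith [hupper.2, hlower.1]

theorem summable_vonMangoldt_non_primes_div :
    Summable fun n : ℕ ↦ (if n.Prime then 0 else Λ n) / n := by
  simpa [Subsingleton.elim _ (0 : ZMod 1)] using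
    vonMangoldt.summable_residueClass_non_primes_div (0 : ZMod 1)

theorem inv_le_vonMangoldt_div {q : ℕ} {Y : ℝ} (hY : 1 < Y) (hq : IsPrimePow q) (hYq : Y < q) :
    (q : ℝ)⁻¹ ≤ Λ q / q / Real.log Y + (if q.Prime then 0 else Λ q) / q / Real.log 2 := by
  have hq0 : (0 : ℝ) < q := by exact_mod_cast hq.pos
  have hinv : ∀ {a c : ℝ}, 0 < c → c ≤ a → (q : ℝ)⁻¹ ≤ a / q / c := fun hc hca => by
    rw [div_right_comm, ← one_div]
    exact div_le_div_of_nonneg_right ((one_le_div hc).2 hca) hq0.le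
  by_cases hp : q.Prime
  · have hΛ : Real.log Y ≤ Λ q := by
      rw [vonMangoldt_apply_prime hp]
      exact Real.log_le_log (by linarith) hYq.le
    rw [if_pos hp, zero_div, zero_div, add_zero]
    exact hinv (Real.log_pos hY) hΛ
  · have hΛ : Real.log 2 ≤ Λ q := by
      rw [vonMangoldt_apply, if_pos hq]
      exact Real.log_le_log two_pos (by exact_mod_cast (Nat.minFac_prime hq.ne_one).two_le)
    rw [if_neg hp]
    have : 0 ≤ Λ q / q / Real.log Y := by
      have := Real.log_pos hY
      positivity
    linarith [hinv (Real.log_pos one_lt_two) hΛ]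

theorem exists_sum_ppowsIoc_inv_le :
    ∃ W : ℝ, ∀ Y : ℝ, 2 ≤ Y → ∑ q ∈ ppowsIoc Y (Y ^ 2), (q : ℝ)⁻¹ ≤ W := by
  set T := ∑' n : ℕ, (if n.Prime then 0 else Λ n) / n
  refine ⟨2 + (7 + T) / Real.log 2, fun Y hY => ?_⟩
  have hlog2 : 0 < Real.log 2 := Real.log_pos one_lt_two
  have hlogY : Real.log 2 ≤ Real.log Y := Real.log_le_log two_pos hY
  have hY2 : 1 ≤ Y ^ 2 := one_le_pow₀ (by linarith)
  have hS : ∑ q ∈ ppowsIoc Y (Y ^ 2), Λ q / q ≤ 2 * Real.log Y + 7 := by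
    calc ∑ q ∈ ppowsIoc Y (Y ^ 2), Λ q / q ≤ ∑ q ∈ ppows (Y ^ 2), Λ q / q :=
          sum_le_sum_of_subset_of_nonneg (filter_subset _ _) fun _ _ _ =>
            div_nonneg vonMangoldt_nonneg (Nat.cast_nonneg _)
      _ = ∑ n ∈ Ioc 0 ⌊Y ^ 2⌋₊, Λ n / n := sum_ppows_eq_sum_Ioc (fun n hn => by
          rw [vonMangoldt_eq_zero_iff.2 hn, zero_div]) _
      _ ≤ 2 * Real.log Y + 7 := by
          have := (abs_le.1 (abs_sum_vonMangoldt_div_sub_log_le hY2)).2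
          rw [Real.log_pow] at this
          push_cast at this
          linarith
  have hT : ∑ q ∈ ppowsIoc Y (Y ^ 2), (if q.Prime then 0 else Λ q) / q ≤ T :=
    summable_vonMangoldt_non_primes_div.sum_le_tsum _ fun n _ =>
      div_nonneg (by split_ifs <;> simp [vonMangoldt_nonneg]) (Nat.cast_nonneg _)
  calc ∑ q ∈ ppowsIoc Y (Y ^ 2), (q : ℝ)⁻¹
      ≤ ∑ q ∈ ppowsIoc Y (Y ^ 2),
          (Λ q / q / Real.log Y + (if q.Prime then 0 else Λ q) / q / Real.log 2) :=
        sum_le_sum fun q hq => by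
          rw [mem_ppowsIoc] at hq
          exact inv_le_vonMangoldt_div (by linarith) hq.1 hq.2.1
    _ = (∑ q ∈ ppowsIoc Y (Y ^ 2), Λ q / q) / Real.log Y
          + (∑ q ∈ ppowsIoc Y (Y ^ 2), (if q.Prime then 0 else Λ q) / q) / Real.log 2 := by
        rw [sum_add_distrib, sum_div, sum_div]
    _ ≤ (2 * Real.log Y + 7) / Real.log Y + T / Real.log 2 := by gcongr; linarith
    _ ≤ 2 + (7 + T) / Real.log 2 := by
        rw [add_div, mul_div_assoc, div_self (by linarith), add_div]
        have : 7 / Real.log Y ≤ 7 / Real.log 2 := by gcongr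
        linarith

theorem abs_AgR_sub_AgR_le (g : ℕ → ℝ) {Y Z : ℝ} (h : Y ≤ Z) :
    |AgR g Z - AgR g Y| ≤ BgR g Z * √(∑ q ∈ ppowsIoc Y Z, (q : ℝ)⁻¹) := by
  set s := ppowsIoc Y Z
  have hfactor : ∀ m : ℕ, |1 - 1 / (m : ℝ)| ≤ 1 := fun m => by
    rcases m.eq_zero_or_pos with rfl | hm
    · simp
    · have : 1 / (m : ℝ) ≤ 1 := div_le_one_of_le₀ (by exact_mod_cast hm) (Nat.cast_nonneg _)
      rw [abs_le]
      constructor <;> linarith [show 0 ≤ 1 / (m : ℝ) by positivity]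
  have hCS : (∑ q ∈ s, |g q| * (q : ℝ)⁻¹) ^ 2 ≤ (∑ q ∈ s, g q ^ 2 / q) * ∑ q ∈ s, (q : ℝ)⁻¹ :=
    sum_sq_le_sum_mul_sum_of_sq_le_mul s (fun _ _ => by positivity) (fun _ _ => by positivity)
      fun q _ => by rw [mul_pow, sq_abs, div_eq_mul_inv, mul_assoc, ← sq]
  have hB : ∑ q ∈ s, g q ^ 2 / q ≤ ∑ q ∈ ppows Z, g q ^ 2 / q :=
    sum_le_sum_of_subset_of_nonneg (filter_subset _ _) fun _ _ _ => by positivity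
  calc |AgR g Z - AgR g Y|
      = |∑ q ∈ s, g q * (1 / (q : ℝ)) * (1 - 1 / (q.minFac : ℝ))| := by
        rw [AgR, AgR, ← sum_ppowsIoc_eq_sub _ h]
    _ ≤ ∑ q ∈ s, |g q| * (q : ℝ)⁻¹ := by
        refine (abs_sum_le_sum_abs _ _).trans (sum_le_sum fun q _ => ?_)
        rw [abs_mul, abs_mul, one_div, abs_inv, Nat.abs_cast]
        exact mul_le_of_le_one_right (by positivity) (hfactor _)
    _ ≤ √((∑ q ∈ s, g q ^ 2 / q) * ∑ q ∈ s, (q : ℝ)⁻¹) :=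
        (le_abs_self _).trans (Real.abs_le_sqrt hCS)
    _ ≤ BgR g Z * √(∑ q ∈ s, (q : ℝ)⁻¹) := by
        rw [Real.sqrt_mul (sum_nonneg fun _ _ => by positivity), BgR]
        gcongr

theorem lam_mul_sum_vonMangoldt_div_le (g : ℕ → ℝ) {lam Y X : ℝ} (hlam : 0 ≤ lam) (hY : 1 ≤ Y)
    (hX : Y ^ 4 = X) :
    lam * ∑ q ∈ ppowsIoc Y (Y ^ 2), Λ q / q ≤
      ∑ q ∈ ppowsIoc Y X, |AgR g X - AgR g (X / q) - lam * Real.log q| / q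
        + BgR g X * √(∑ r ∈ ppowsIoc (Y ^ 2) X, (r : ℝ)⁻¹)
          * ∑ q ∈ ppowsIoc Y (Y ^ 2), (q : ℝ)⁻¹ := by
  set D := BgR g X * √(∑ r ∈ ppowsIoc (Y ^ 2) X, (r : ℝ)⁻¹)
  have hY2X : Y ^ 2 ≤ X := by rw [← hX]; nlinarith [one_le_pow₀ (n := 2) hY]
  have hterm : ∀ q ∈ ppowsIoc Y (Y ^ 2), lam * (Λ q / q) ≤
      |AgR g X - AgR g (X / q) - lam * Real.log q| / q + D * (q : ℝ)⁻¹ := by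
    intro q hq
    obtain ⟨hpp, -, hqY2⟩ := mem_ppowsIoc.1 hq
    have hq0 : (0 : ℝ) < q := by exact_mod_cast hpp.pos
    have hXq : Y ^ 2 ≤ X / q := by
      rw [le_div_iff₀ hq0, ← hX]
      nlinarith [one_le_pow₀ (n := 2) hY]
    have hdiff : |AgR g X - AgR g (X / q)| ≤ D := by
      have hXqX : X / q ≤ X := div_le_self (by linarith) (by exact_mod_cast hpp.one_lt.le)
      refine (abs_AgR_sub_AgR_le g hXqX).trans
        (mul_le_mul_of_nonneg_left (Real.sqrt_le_sqrt ?_) (Real.sqrt_nonneg _))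
      exact sum_le_sum_of_subset_of_nonneg (ppowsIoc_subset_ppowsIoc hXq le_rfl)
        fun _ _ _ => by positivity
    have hlog : lam * Λ q ≤ |AgR g X - AgR g (X / q) - lam * Real.log q| + D := by
      have := mul_le_mul_of_nonneg_left (vonMangoldt_le_log (n := q)) hlam
      linarith [neg_abs_le (AgR g X - AgR g (X / q) - lam * Real.log q),
        le_abs_self (AgR g X - AgR g (X / q))]
    calc lam * (Λ q / q) = lam * Λ q / q := (mul_div_assoc _ _ _).symm
      _ ≤ (|AgR g X - AgR g (X / q) - lam * Real.log q| + D) / q := by gcongr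
      _ = _ := by ring
  calc lam * ∑ q ∈ ppowsIoc Y (Y ^ 2), Λ q / q
      ≤ ∑ q ∈ ppowsIoc Y (Y ^ 2),
          (|AgR g X - AgR g (X / q) - lam * Real.log q| / q + D * (q : ℝ)⁻¹) := by
        rw [mul_sum]
        exact sum_le_sum hterm
    _ ≤ _ := by
        rw [sum_add_distrib, ← mul_sum]
        gcongr
        exact ppowsIoc_subset_ppowsIoc le_rfl hY2X

theorem lam_mul_log_le (g : ℕ → ℝ) {lam W Y X : ℝ} (hlam : 0 ≤ lam)
    (hW : ∀ Y : ℝ, 2 ≤ Y → ∑ q ∈ ppowsIoc Y (Y ^ 2), (q : ℝ)⁻¹ ≤ W)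
    (hY0 : 0 < Y) (hlogY : 28 ≤ Real.log Y) (hX : Y ^ 4 = X) :
    lam * Real.log X ≤
      8 * (∑ q ∈ ppowsIoc Y X, |AgR g X - AgR g (X / q) - lam * Real.log q| / q
        + BgR g X * √W * W) := by
  have hY : 2 ≤ Y := by linarith [Real.add_one_le_exp (Real.log Y), Real.exp_log hY0]
  have hD := hW (Y ^ 2) (by nlinarith)
  rw [← pow_mul, hX] at hD
  have hwindows : BgR g X * √(∑ r ∈ ppowsIoc (Y ^ 2) X, (r : ℝ)⁻¹)
      * ∑ q ∈ ppowsIoc Y (Y ^ 2), (q : ℝ)⁻¹ ≤ BgR g X * √W * W := by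
    have : 0 ≤ BgR g X := Real.sqrt_nonneg _
    gcongr
    exact hW Y hY
  have hlogX : Real.log X = 4 * Real.log Y := by rw [← hX, Real.log_pow]; norm_num
  have hΛ := le_sum_ppowsIoc_vonMangoldt_div (by linarith : 1 ≤ Y)
  have hkey := lam_mul_sum_vonMangoldt_div_le g hlam (by linarith) hX
  have := mul_le_mul_of_nonneg_left
    (show Real.log X / 8 ≤ ∑ q ∈ ppowsIoc Y (Y ^ 2), Λ q / q by linarith) hlam
  linarith

theorem stmt15_general (g : ℕ → ℝ) (lam : ℝ → ℝ)
    (hlamnn : ∀ X : ℝ, 0 ≤ lam X)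
    (hsmall : ∀ ε : ℝ, 0 < ε → ∃ X₀ : ℝ, ∀ X : ℝ, X₀ ≤ X →
      ∑ q ∈ (ppows X).filter (fun q : ℕ => X ^ ((1 : ℝ) / 4) < (q : ℝ)),
          |AgR g X - AgR g (X / (q : ℝ)) - lam X * Real.log q| / (q : ℝ)
        ≤ ε * BgR g X) :
    ∃ C : ℝ, 0 < C ∧ ∃ X₀ : ℝ, ∀ X : ℝ, X₀ ≤ X →
      lam X ≤ C * BgR g X / Real.log X := by
  obtain ⟨W, hW⟩ := exists_sum_ppowsIoc_inv_le
  have hW0 : 0 ≤ W := (sum_nonneg fun _ _ => by positivity).trans (hW 2 le_rfl)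
  obtain ⟨X₁, hX₁⟩ := hsmall 1 one_pos
  refine ⟨8 * (1 + √W * W), by positivity, max X₁ (Real.exp 112), fun X hX => ?_⟩
  obtain ⟨hX₁X, hXexp⟩ := max_le_iff.1 hX
  have hlogX : 112 ≤ Real.log X := by simpa using Real.log_le_log (Real.exp_pos _) hXexp
  have hX0 : 0 < X := (Real.exp_pos _).trans_le hXexp
  set Y := X ^ ((1 : ℝ) / 4)
  have hYX : Y ^ 4 = X := by
    rw [← Real.rpow_natCast, ← Real.rpow_mul hX0.le]
    norm_num
  have hlogY : Real.log X = 4 * Real.log Y := by rw [← hYX, Real.log_pow]; norm_num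
  -- `ppowsIoc Y X` is, by definition, the range of summation in `hsmall`.
  have hsmallX : ∑ q ∈ ppowsIoc Y X, |AgR g X - AgR g (X / q) - lam X * Real.log q| / q
      ≤ 1 * BgR g X := hX₁ X hX₁X
  have := lam_mul_log_le g (hlamnn X) hW (Real.rpow_pos_of_pos hX0 _) (by linarith) hYX
  rw [le_div_iff₀ (by linarith)]
  linarith

/-- If `∑_{X^{1/4} < p^k ≤ X} |A_g(X) - A_g(X/p^k) - λ(X) log p^k|/p^k = o(B_g(X))`
with `λ ≥ 0`, then `λ(X) ≪ B_g(X)/log X`. -/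
theorem stmt15 (g : ℕ → ℝ) (hg : IsAdditiveR g) (lam : ℝ → ℝ)
    (hlamnn : ∀ X : ℝ, 0 ≤ lam X)
    (hsmall : ∀ ε : ℝ, 0 < ε → ∃ X₀ : ℝ, ∀ X : ℝ, X₀ ≤ X →
      ∑ q ∈ (ppows X).filter (fun q : ℕ => X ^ ((1 : ℝ) / 4) < (q : ℝ)),
          |AgR g X - AgR g (X / (q : ℝ)) - lam X * Real.log q| / (q : ℝ)
        ≤ ε * BgR g X) :
    ∃ C : ℝ, 0 < C ∧ ∃ X₀ : ℝ, ∀ X : ℝ, X₀ ≤ X →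
      lam X ≤ C * BgR g X / Real.log X :=
  stmt15_general g lam hlamnn hsmall
end

section
/- Let g: ℕ → ℂ be additive, let δ ∈ (0, 1/2) be fixed, and suppose that for some function λ(X), uniformly over X^δ < t₁ ≤ t₂ ≤ X, one has A_g(t₂) − A_g(t₁) = λ(X) log(t₂/t₁) + o(B_g(X)). Then λ is slowly varying: for each fixed u ∈ (δ, 1], λ(X) = λ(X^u) + o(B_g(X)/log X). -/
open Finset

lemma Bg_nonneg (g : ℕ → ℂ) (Y : ℝ) : 0 ≤ Bg g Y := Real.sqrt_nonneg _

lemma Bg_mono (g : ℕ → ℂ) {a b : ℝ} (h : a ≤ b) : Bg g a ≤ Bg g b := by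
  unfold Bg
  apply Real.sqrt_le_sqrt
  apply Finset.sum_le_sum_of_subset_of_nonneg
  · exact Finset.filter_subset_filter _ (Finset.Icc_subset_Icc_right (Nat.floor_le_floor h))
  · intro i _ _; positivity

/-- If uniformly over `X^δ < t₁ ≤ t₂ ≤ X` one has
`A_g(t₂) - A_g(t₁) = λ(X) log(t₂/t₁) + o(B_g(X))`, then `λ` is slowly varying:
`λ(X) = λ(X^u) + o(B_g(X)/log X)` for each fixed `u ∈ (δ, 1]`. -/
theorem stmt18 (g : ℕ → ℂ) (hg : IsAdditive g) (lam : ℝ → ℂ) (δ : ℝ)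
    (hδ0 : 0 < δ) (hδ1 : δ < 1 / 2)
    (happ : ∀ ε : ℝ, 0 < ε → ∃ X₀ : ℝ, ∀ X : ℝ, X₀ ≤ X →
      ∀ t₁ t₂ : ℝ, X ^ δ < t₁ → t₁ ≤ t₂ → t₂ ≤ X →
        ‖Ag g t₂ - Ag g t₁ - lam X * (Real.log (t₂ / t₁) : ℂ)‖ ≤ ε * Bg g X) :
    ∀ u : ℝ, δ < u → u ≤ 1 → ∀ ε : ℝ, 0 < ε → ∃ X₀ : ℝ, ∀ X : ℝ, X₀ ≤ X →
      ‖lam X - lam (X ^ u)‖ ≤ ε * Bg g X / Real.log X := by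
  intro u hδu hu1 ε hε
  have hu0 : 0 < u := hδ0.trans hδu
  set w : ℝ := (δ + u) / 2 with hw
  have hδw : δ < w := by rw [hw]; linarith
  have hwu : w < u := by rw [hw]; linarith
  set c : ℝ := u - w with hc
  have hc0 : 0 < c := by rw [hc]; linarith
  set ε₁ : ℝ := ε * c / 2 with hε₁def
  have hε₁ : 0 < ε₁ := by positivity
  obtain ⟨X₁, hX₁⟩ := happ ε₁ hε₁
  refine ⟨max 2 (max X₁ ((max 1 X₁) ^ (1 / u))), fun X hX => ?_⟩
  have hX2 : (2 : ℝ) ≤ X := le_trans (le_max_left _ _) hX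
  have hX1lt : (1 : ℝ) < X := by linarith
  have hX0 : (0 : ℝ) < X := by linarith
  have hlogX : 0 < Real.log X := Real.log_pos hX1lt
  have hXX₁ : X₁ ≤ X := le_trans (le_trans (le_max_left _ _) (le_max_right _ _)) hX
  -- X^u ≥ X₁
  have hXuX₁ : X₁ ≤ X ^ u := by
    have h1 : (max 1 X₁) ^ (1 / u) ≤ X :=
      le_trans (le_trans (le_max_right _ _) (le_max_right _ _)) hX
    have h2 : ((max 1 X₁) ^ (1 / u)) ^ u ≤ X ^ u :=
      Real.rpow_le_rpow (Real.rpow_nonneg (le_trans zero_le_one (le_max_left _ _)) _) h1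
        hu0.le
    have h3 : ((max 1 X₁) ^ (1 / u)) ^ u = max 1 X₁ := by
      rw [← Real.rpow_mul (le_trans zero_le_one (le_max_left _ _)), one_div,
        inv_mul_cancel₀ hu0.ne', Real.rpow_one]
    rw [h3] at h2
    exact le_trans (le_max_right _ _) h2
  set Y : ℝ := X ^ u with hY
  -- bounds at X
  have hXw_lt : X ^ δ < X ^ w := Real.rpow_lt_rpow_left_iff hX1lt |>.mpr hδw
  have hXwu : X ^ w ≤ X ^ u := Real.rpow_le_rpow_left_iff hX1lt |>.mpr hwu.le
  have hXuX : X ^ u ≤ X := by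
    nth_rewrite 2 [← Real.rpow_one X]
    exact Real.rpow_le_rpow_left_iff hX1lt |>.mpr hu1
  have hb1 := hX₁ X hXX₁ (X ^ w) (X ^ u) hXw_lt hXwu hXuX
  -- bounds at Y = X^u
  have hYδ : Y ^ δ < X ^ w := by
    rw [hY, ← Real.rpow_mul hX0.le]
    apply Real.rpow_lt_rpow_left_iff hX1lt |>.mpr
    nlinarith
  have hb2 := hX₁ Y hXuX₁ (X ^ w) (X ^ u) hYδ hXwu le_rfl
  -- log of ratio
  have hXwpos : 0 < X ^ w := Real.rpow_pos_of_pos hX0 _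
  have hlog : Real.log (X ^ u / X ^ w) = c * Real.log X := by
    rw [Real.log_div (Real.rpow_pos_of_pos hX0 u).ne' hXwpos.ne',
      Real.log_rpow hX0, Real.log_rpow hX0, hc]; ring
  have hBgY : Bg g Y ≤ Bg g X := Bg_mono g hXuX
  -- combine
  have key : ‖(lam X - lam Y) * ((Real.log (X ^ u / X ^ w) : ℝ) : ℂ)‖
      ≤ ε₁ * Bg g X + ε₁ * Bg g X := by
    have : (lam X - lam Y) * ((Real.log (X ^ u / X ^ w) : ℝ) : ℂ)
        = (Ag g (X ^ u) - Ag g (X ^ w) - lam Y * (Real.log (X ^ u / X ^ w) : ℂ))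
          - (Ag g (X ^ u) - Ag g (X ^ w) - lam X * (Real.log (X ^ u / X ^ w) : ℂ)) := by
      ring
    rw [this]
    refine le_trans (norm_sub_le _ _) (add_le_add ?_ hb1)
    exact le_trans hb2 (by nlinarith [Bg_nonneg g X])
  rw [norm_mul, Complex.norm_real, Real.norm_eq_abs, hlog,
    abs_of_nonneg (by positivity)] at key
  have : ‖lam X - lam Y‖ * (c * Real.log X) ≤ ε * c * Bg g X := by
    rw [hε₁def] at key; nlinarith
  rw [le_div_iff₀ hlogX]
  calc ‖lam X - lam Y‖ * Real.log X
      = ‖lam X - lam Y‖ * (c * Real.log X) / c := by field_simp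
    _ ≤ ε * c * Bg g X / c := by exact div_le_div_of_nonneg_right this hc0.le
    _ = ε * Bg g X := by field_simp
end
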